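/- arXiv:1904.02799 — 4 statements merged into one kernel-verified Lean document; each statement's English description precedes it below -/
import Mathlib

section
/- If a digraph D can be partitioned into k ≥ 2 induced subdigraphs H_1, ..., H_k such that each H_i satisfies the BE-property and α(D) = α(H_1) + ... + α(H_k), then D satisfies the BE-property. -/
open Relation

variable {V : Type*}

/-- `u` and `v` are adjacent in the digraph with arc relation `A`. -/
def DAdj (A : V → V → Prop) (u v : V) : Prop := A u v ∨ A v u

/-- `v` is a source: no arc enters `v`. -/
def IsSource (A : V → V → Prop) (v : V) : Prop := ∀ u, ¬ A u v

/-- `v` is a sink: no arc leaves `v`. -/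
def IsSink (A : V → V → Prop) (v : V) : Prop := ∀ u, ¬ A v u

/-- A stable (independent) set of the digraph. -/
def IsStable (A : V → V → Prop) (S : Set V) : Prop :=
  ∀ u ∈ S, ∀ v ∈ S, u ≠ v → ¬ DAdj A u v

/-- The stability number. -/
noncomputable def alphaNum (A : V → V → Prop) : ℕ :=
  sSup {n | ∃ S : Set V, IsStable A S ∧ S.ncard = n}

/-- A maximum stable set. -/
def IsMaxStable (A : V → V → Prop) (S : Set V) : Prop :=
  IsStable A S ∧ ∀ T : Set V, IsStable A T → T.ncard ≤ S.ncard

/-- A (nonempty) directed path, given as its list of vertices. -/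
def IsDiPath (A : V → V → Prop) (l : List V) : Prop :=
  l ≠ [] ∧ l.Nodup ∧ l.Chain' A

/-- A path partition of the digraph: every vertex lies on exactly one of the paths. -/
def IsPathPartition (A : V → V → Prop) (P : Set (List V)) : Prop :=
  (∀ l ∈ P, IsDiPath A l) ∧ ∀ v : V, ∃! l, l ∈ P ∧ v ∈ l

/-- An `S`-path partition: each path contains exactly one vertex of `S`. -/
def IsSPartition (A : V → V → Prop) (S : Set V) (P : Set (List V)) : Prop :=
  IsPathPartition A P ∧ ∀ l ∈ P, ∃! s, s ∈ l ∧ s ∈ S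

/-- An `S`-BE-path partition: each path contains exactly one vertex of `S`,
which is moreover an endpoint of the path. -/
def IsBEPartition (A : V → V → Prop) (S : Set V) (P : Set (List V)) : Prop :=
  IsSPartition A S P ∧
    ∀ l ∈ P, ∀ s ∈ l, s ∈ S → l.head? = some s ∨ l.getLast? = some s

/-- The α-property: every maximum stable set admits an `S`-path partition. -/
def AlphaProperty (A : V → V → Prop) : Prop :=
  ∀ S : Set V, IsMaxStable A S → ∃ P, IsSPartition A S P

/-- The BE-property: every maximum stable set admits an `S`-BE-path partition. -/
def BEProperty (A : V → V → Prop) : Prop :=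
  ∀ S : Set V, IsMaxStable A S → ∃ P, IsBEPartition A S P

/-- α-diperfect: every induced subdigraph satisfies the α-property. -/
def AlphaDiperfect (A : V → V → Prop) : Prop :=
  ∀ W : Set V, AlphaProperty (fun a b : W => A a.1 b.1)

/-- BE-diperfect: every induced subdigraph satisfies the BE-property. -/
def BEDiperfect (A : V → V → Prop) : Prop :=
  ∀ W : Set V, BEProperty (fun a b : W => A a.1 b.1)

/-- Mutual reachability. -/
def MutReach (A : V → V → Prop) (u v : V) : Prop :=
  ReflTransGen A u v ∧ ReflTransGen A v u

/-- Semicomplete digraph: any two distinct vertices are adjacent. -/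
def Semicomplete (A : V → V → Prop) : Prop :=
  ∀ u v : V, u ≠ v → DAdj A u v

/-- Strongly connected digraph. -/
def Strong (A : V → V → Prop) : Prop :=
  ∀ u v : V, ReflTransGen A u v

/-- The digraph has an induced transitive triangle. -/
def HasInducedTransitiveTriangle (A : V → V → Prop) : Prop :=
  ∃ a b c : V, a ≠ b ∧ a ≠ c ∧ b ≠ c ∧
    A a b ∧ A a c ∧ A c b ∧ ¬ A b a ∧ ¬ A c a ∧ ¬ A b c

/-- The digraph is a blocking odd cycle: its underlying graph is an odd cycle
`x_1 x_2 ⋯ x_{2k+1} x_1` (with `k ≥ 1`; here `x i` is `x_{i+1}`), and both `x_1`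
and `x_2` are each a source or a sink. -/
def IsBlockingOddCycle (A : V → V → Prop) : Prop :=
  ∃ (k : ℕ) (x : ZMod (2 * k + 1) → V), 1 ≤ k ∧ Function.Bijective x ∧
    (∀ i j, DAdj A (x i) (x j) ↔ (j = i + 1 ∨ i = j + 1)) ∧
    (IsSource A (x 0) ∨ IsSink A (x 0)) ∧
    (IsSource A (x 1) ∨ IsSink A (x 1))

/-- The digraph is an anti-directed odd cycle: its underlying graph is an odd cycle
`x_1 ⋯ x_{2k+1} x_1` with `k ≥ 2` (here `x m` is `x_{m+1}`), and each of
`x_1, x_2, x_3, x_4, x_6, x_8, …, x_{2k}` is a source or a sink. -/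
def IsAntiDirectedOddCycle (A : V → V → Prop) : Prop :=
  ∃ (k : ℕ) (x : ZMod (2 * k + 1) → V), 2 ≤ k ∧ Function.Bijective x ∧
    (∀ i j, DAdj A (x i) (x j) ↔ (j = i + 1 ∨ i = j + 1)) ∧
    ∀ m : ℕ, m ≤ 2 * k →
      (m ≤ 3 ∨ (5 ≤ m ∧ m ≤ 2 * k - 1 ∧ Odd m)) →
      (IsSource A (x (m : ZMod (2 * k + 1))) ∨ IsSink A (x (m : ZMod (2 * k + 1))))

/-- `v` is a universal vertex. -/
def IsUniversal (A : V → V → Prop) (v : V) : Prop := ∀ u, u ≠ v → DAdj A u v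

/-- The underlying simple graph of a digraph. -/
def underlyingGraph (A : V → V → Prop) : SimpleGraph V where
  Adj u v := u ≠ v ∧ DAdj A u v
  symm := ⟨fun _ _ h => ⟨h.1.symm, h.2.symm⟩⟩
  loopless := ⟨fun _ h => h.1 rfl⟩

/-- The underlying graph of the digraph is a cycle. -/
def UnderlyingIsCycle (A : V → V → Prop) : Prop :=
  ∃ (n : ℕ) (x : ZMod n → V), 3 ≤ n ∧ Function.Bijective x ∧
    ∀ i j, DAdj A (x i) (x j) ↔ (j = i + 1 ∨ i = j + 1)

/-- A perfect graph: every induced subgraph has chromatic number equal to its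
clique number. -/
def GraphPerfect (G : SimpleGraph V) : Prop :=
  ∀ W : Set V, (G.induce W).chromaticNumber = ((G.induce W).cliqueNum : ℕ∞)

/-- A Hamilton directed path whose endpoints are `{s, t}` (in some order). -/
def HamiltonPathBetween (A : V → V → Prop) (s t : V) : Prop :=
  ∃ l : List V, IsDiPath A l ∧ (∀ v : V, v ∈ l) ∧
    ((l.head? = some s ∧ l.getLast? = some t) ∨
      (l.head? = some t ∧ l.getLast? = some s))

/-- A Hamilton directed path starting at `s` and ending at `t`. -/
def HamiltonPathFromTo (A : V → V → Prop) (s t : V) : Prop :=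
  ∃ l : List V, IsDiPath A l ∧ (∀ v : V, v ∈ l) ∧
    l.head? = some s ∧ l.getLast? = some t

/-- The exceptional strong semicomplete digraph on four vertices
(`a,b,c,d = 0,1,2,3`): the 4-cycle `a→d→c→b→a` together with digons `a↔c`, `b↔d`. -/
def BadFour : Fin 4 → Fin 4 → Prop := fun u v =>
  (u, v) ∈ ({(0,3), (3,2), (2,1), (1,0), (0,2), (2,0), (1,3), (3,1)} :
    Set (Fin 4 × Fin 4))

/-- A locally in-semicomplete digraph: any two in-neighbours of a vertex are adjacent. -/
def LocallyInSemicomplete (A : V → V → Prop) : Prop :=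
  ∀ v u w : V, A u v → A w v → u ≠ w → DAdj A u w

/-- A strong component: a maximal set of pairwise mutually reachable vertices. -/
def IsStrongComponent (A : V → V → Prop) (X : Set V) : Prop :=
  X.Nonempty ∧ (∀ u ∈ X, ∀ v ∈ X, MutReach A u v) ∧
    ∀ u v, v ∈ X → MutReach A u v → u ∈ X

/-- `C` is the vertex set of an induced cycle of `G`. -/
def InducedCycleSet (G : SimpleGraph V) (C : Set V) : Prop :=
  ∃ (n : ℕ) (x : ZMod n → V), 3 ≤ n ∧ Function.Injective x ∧ Set.range x = C ∧
    ∀ i j, G.Adj (x i) (x j) ↔ (j = i + 1 ∨ i = j + 1)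

/-- `G` contains a subdivision of `K₄`: four branch vertices joined by
pairwise internally disjoint paths. -/
def HasK4Subdivision (G : SimpleGraph V) : Prop :=
  ∃ (b : Fin 4 → V) (P : ∀ i j : Fin 4, G.Walk (b i) (b j)),
    Function.Injective b ∧
    (∀ i j, i ≠ j → (P i j).IsPath) ∧
    (∀ i j m, i ≠ j → b m ∈ (P i j).support → m = i ∨ m = j) ∧
    (∀ i j k l, i ≠ j → k ≠ l → ({i, j} : Finset (Fin 4)) ≠ {k, l} →
      ∀ v, v ∈ (P i j).support → v ∈ (P k l).support →
        (v = b i ∨ v = b j) ∧ (v = b k ∨ v = b l))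

/-- 2-connected: connected, at least 3 vertices, and no cut vertex. -/
def TwoConnected (G : SimpleGraph V) : Prop :=
  G.Connected ∧ 3 ≤ Nat.card V ∧
    ∀ v : V, (G.induce {u | u ≠ v}).Preconnected

/-! The trace of a maximum stable set `S` on each part `H_i` is stable in `H_i`, so its size is
at most `α(H_i)`; as these sizes add up to `|S| = α(D) = ∑ α(H_i)`, every trace is a maximum
stable set of its part. The BE-path partitions of the parts for these traces together form one
of `D` for `S`. -/

open Function

section Induced

variable {W : Type*} {A : V → V → Prop} {f : W → V}

lemma IsStable.preimage (hf : Injective f) {S : Set V} (hS : IsStable A S) :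
    IsStable (fun a b => A (f a) (f b)) (f ⁻¹' S) :=
  fun _ hx _ hy hxy => hS _ hx _ hy (hf.ne hxy)

lemma IsDiPath.map (hf : Injective f) {l : List W}
    (hl : IsDiPath (fun a b => A (f a) (f b)) l) : IsDiPath A (l.map f) :=
  ⟨by simpa using hl.1, hl.2.1.map hf, (List.isChain_map f).2 hl.2.2⟩

lemma existsUnique_mem_map_and_mem {l : List W} {S : Set V}
    (hl : ∃! s, s ∈ l ∧ s ∈ f ⁻¹' S) : ∃! s, s ∈ l.map f ∧ s ∈ S := by
  obtain ⟨x, ⟨hxl, hxS⟩, hx⟩ := hl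
  refine ⟨f x, ⟨List.mem_map_of_mem hxl, hxS⟩, ?_⟩
  rintro _ ⟨hyl, hyS⟩
  obtain ⟨y, hy, rfl⟩ := List.mem_map.1 hyl
  rw [hx y ⟨hy, hyS⟩]

lemma isEndpoint_map {l : List W} {s : W}
    (h : l.head? = some s ∨ l.getLast? = some s) :
    (l.map f).head? = some (f s) ∨ (l.map f).getLast? = some (f s) := by
  rw [List.head?_map, List.getLast?_map]
  rcases h with h | h <;> simp [h]

end Induced

section Partition

variable {A : V → V → Prop} {ι : Type*} {W : ι → Set V}

lemma isPathPartition_iUnion (hdisj : Pairwise (Disjoint on W)) (hcover : ⋃ i, W i = Set.univ)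
    {P : ∀ i, Set (List (W i))} (hP : ∀ i, IsPathPartition (fun a b : W i => A a.1 b.1) (P i)) :
    IsPathPartition A (⋃ i, List.map Subtype.val '' P i) := by
  refine ⟨?_, fun v => ?_⟩
  · simp only [Set.mem_iUnion, Set.mem_image]
    rintro _ ⟨i, l, hl, rfl⟩
    exact ((hP i).1 l hl).map Subtype.val_injective
  obtain ⟨i, hvi⟩ := Set.mem_iUnion.1 (hcover ▸ Set.mem_univ v)
  obtain ⟨l, ⟨hlP, hvl⟩, hl⟩ := (hP i).2 ⟨v, hvi⟩
  refine ⟨l.map Subtype.val,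
    ⟨Set.mem_iUnion.2 ⟨i, Set.mem_image_of_mem _ hlP⟩, List.mem_map_of_mem hvl⟩, ?_⟩
  simp only [Set.mem_iUnion, Set.mem_image]
  rintro _ ⟨⟨j, m, hmP, rfl⟩, hvm⟩
  obtain ⟨x, hxm, rfl⟩ := List.mem_map.1 hvm
  obtain rfl : j = i := by
    by_contra hji
    exact Set.disjoint_left.1 (hdisj hji) x.2 hvi
  rw [hl m ⟨hmP, hxm⟩]

lemma isBEPartition_iUnion (hdisj : Pairwise (Disjoint on W)) (hcover : ⋃ i, W i = Set.univ)
    {S : Set V} {P : ∀ i, Set (List (W i))}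
    (hP : ∀ i, IsBEPartition (fun a b : W i => A a.1 b.1) (Subtype.val ⁻¹' S) (P i)) :
    IsBEPartition A S (⋃ i, List.map Subtype.val '' P i) := by
  refine ⟨⟨isPathPartition_iUnion hdisj hcover fun i => (hP i).1.1, ?_⟩, ?_⟩ <;>
    simp only [Set.mem_iUnion, Set.mem_image] <;> rintro _ ⟨i, l, hl, rfl⟩
  · exact existsUnique_mem_map_and_mem ((hP i).1.2 l hl)
  · intro _ hsl hsS
    obtain ⟨s, hs, rfl⟩ := List.mem_map.1 hsl
    exact isEndpoint_map ((hP i).2 l hl s hs hsS)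

end Partition

section StabilityNumber

variable [Finite V] {A : V → V → Prop}

lemma IsStable.ncard_le_alphaNum {T : Set V} (hT : IsStable A T) : T.ncard ≤ alphaNum A :=
  le_csSup ⟨Nat.card V, fun _ ⟨S, _, hn⟩ => hn ▸ Set.ncard_le_card S⟩ ⟨T, hT, rfl⟩

lemma IsMaxStable.alphaNum_eq {S : Set V} (hS : IsMaxStable A S) : alphaNum A = S.ncard :=
  le_antisymm (csSup_le ⟨_, S, hS.1, rfl⟩ fun _ ⟨T, hT, hn⟩ => hn ▸ hS.2 T hT)
    hS.1.ncard_le_alphaNum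

lemma ncard_eq_sum_ncard_preimage_val {ι : Type*} [Fintype ι] {W : ι → Set V}
    (hdisj : Pairwise (Disjoint on W)) (hcover : ⋃ i, W i = Set.univ) (S : Set V) :
    S.ncard = ∑ i, (Subtype.val ⁻¹' S : Set (W i)).ncard := by
  have hS : S = ⋃ i, W i ∩ S := by rw [← Set.iUnion_inter, hcover, Set.univ_inter]
  conv_lhs => rw [hS]
  rw [Set.ncard_iUnion_of_finite (fun _ => Set.toFinite _)
    fun i j hij => (hdisj hij).mono Set.inter_subset_left Set.inter_subset_left,
    finsum_eq_sum_of_fintype]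
  refine Finset.sum_congr rfl fun i _ => ?_
  rw [← Subtype.image_preimage_coe, Set.ncard_image_of_injective _ Subtype.val_injective]

lemma IsMaxStable.preimage_val_of_alphaNum_eq_sum {ι : Type*} [Fintype ι] {W : ι → Set V}
    (hdisj : Pairwise (Disjoint on W)) (hcover : ⋃ i, W i = Set.univ)
    (halpha : alphaNum A = ∑ i, alphaNum (fun a b : W i => A a.1 b.1))
    {S : Set V} (hS : IsMaxStable A S) (i : ι) :
    IsMaxStable (fun a b : W i => A a.1 b.1) (Subtype.val ⁻¹' S) := by
  have hstable : ∀ j, IsStable (fun a b : W j => A a.1 b.1) (Subtype.val ⁻¹' S) :=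
    fun j => hS.1.preimage Subtype.val_injective
  have hsum : ∑ j, (Subtype.val ⁻¹' S : Set (W j)).ncard =
      ∑ j, alphaNum (fun a b : W j => A a.1 b.1) := by
    rw [← ncard_eq_sum_ncard_preimage_val hdisj hcover, ← hS.alphaNum_eq, halpha]
  have heq := (Finset.sum_eq_sum_iff_of_le fun j _ => (hstable j).ncard_le_alphaNum).1 hsum i
    (Finset.mem_univ i)
  exact ⟨hstable i, fun T hT => heq ▸ hT.ncard_le_alphaNum⟩

end StabilityNumber

theorem partition_BEProperty_general {V : Type*} [Finite V] (A : V → V → Prop)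
    (k : ℕ) (W : Fin k → Set V)
    (hdisj : Pairwise fun i j => Disjoint (W i) (W j))
    (hcover : (⋃ i, W i) = Set.univ)
    (hprop : ∀ i, BEProperty (fun a b : W i => A a.1 b.1))
    (halpha : alphaNum A = ∑ i, alphaNum (fun a b : W i => A a.1 b.1)) :
    BEProperty A := by
  intro S hS
  choose P hP using fun i =>
    hprop i _ (hS.preimage_val_of_alphaNum_eq_sum hdisj hcover halpha i)
  exact ⟨_, isBEPartition_iUnion hdisj hcover hP⟩

/-- If `D` is partitioned into `k ≥ 2` induced subdigraphs each satisfying the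
BE-property, with `α(D)` equal to the sum of their stability numbers, then `D` satisfies
the BE-property. -/
theorem partition_BEProperty {V : Type*} [Finite V] (A : V → V → Prop)
    (hirr : ∀ v, ¬ A v v) (k : ℕ) (hk : 2 ≤ k) (W : Fin k → Set V)
    (hne : ∀ i, (W i).Nonempty)
    (hdisj : Pairwise fun i j => Disjoint (W i) (W j))
    (hcover : (⋃ i, W i) = Set.univ)
    (hprop : ∀ i, BEProperty (fun a b : W i => A a.1 b.1))
    (halpha : alphaNum A = ∑ i, alphaNum (fun a b : W i => A a.1 b.1)) :
    BEProperty A :=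
  partition_BEProperty_general A k W hdisj hcover hprop halpha
end

section
/- If B is a clique cut of a graph G, then G can be partitioned into two proper induced subgraphs H_1 and H_2 such that α(G) = α(H_1) + α(H_2); moreover, every edge uv of G with u ∈ V(H_1) and v ∈ V(H_2) satisfies {u,v} ∩ B ≠ ∅. -/
open Relation

variable {V : Type*}

/-!
Let `C` be a union of components of `G - B`, so that no edge joins `C` to `D = V ∖ (C ∪ B)`
(if `G` itself is disconnected, use a component of `G` and `∅` in place of `B`).
Put into `H₁` the set `C` together with those `s ∈ B` for which `α(C + s) = α(C)`, and let `H₂` be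
the rest. An independent set meets the clique `B` at most once, so `α(H₁) = α(C)`. An independent
set `T` of `H₂` meets `B` in at most one vertex `s`, which raises `α(C)`; so `T ∖ B` together
with a maximum independent set of `C` (or of `C + s`, which contains `s`) is independent in `G`,
whence `α(H₁) + α(H₂) ≤ α(G)`. The reverse inequality is subadditivity of `α`.
-/

namespace SimpleGraph

variable (G : SimpleGraph V)

noncomputable def indepNumOn (W : Set V) : ℕ :=
  sSup {n | ∃ S ⊆ W, G.IsIndepSet S ∧ S.ncard = n}

variable {G} {A C K S W W₁ W₂ : Set V}

lemma exists_adj_closed_of_not_preconnected (h : ¬G.Preconnected) :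
    ∃ C : Set V, C.Nonempty ∧ Cᶜ.Nonempty ∧ ∀ a ∈ C, ∀ b, G.Adj a b → b ∈ C := by
  obtain ⟨u, v, huv⟩ : ∃ u v, ¬G.Reachable u v := by simpa [Preconnected] using h
  exact ⟨{w | G.Reachable u w}, ⟨u, .refl u⟩, ⟨v, huv⟩, fun a ha b hab => ha.trans hab.reachable⟩

lemma exists_adj_closed_of_not_preconnected_induce_compl (h : ¬(G.induce Sᶜ).Preconnected) :
    ∃ C : Set V, C.Nonempty ∧ (C ∪ S)ᶜ.Nonempty ∧ ∀ a ∈ C, ∀ b, G.Adj a b → b ∈ C ∪ S := by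
  obtain ⟨C, hCne, ⟨v, hv⟩, hC⟩ := (G.induce Sᶜ).exists_adj_closed_of_not_preconnected h
  refine ⟨Subtype.val '' C, hCne.image _, ⟨v, ?_⟩, ?_⟩
  · rintro (⟨w, hw, hwv⟩ | hvS)
    · exact hv (Subtype.val_injective hwv ▸ hw)
    · exact v.2 hvS
  · rintro _ ⟨a, ha, rfl⟩ b hab
    by_cases hb : b ∈ S
    · exact Or.inr hb
    · exact Or.inl ⟨⟨b, hb⟩, hC a ha _ hab, rfl⟩

lemma isStable_adj_iff : IsStable G.Adj S ↔ G.IsIndepSet S := by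
  simp only [IsStable, DAdj, Set.Pairwise, G.adj_comm, or_self]

lemma alphaNum_adj : alphaNum G.Adj = G.indepNumOn Set.univ := by
  simp only [alphaNum, indepNumOn, isStable_adj_iff, Set.subset_univ, true_and]

lemma indepNumOn_induce_univ (W : Set V) : (G.induce W).indepNumOn Set.univ = G.indepNumOn W := by
  unfold indepNumOn
  congr 1
  ext n
  constructor
  · rintro ⟨S, -, hS, rfl⟩
    refine ⟨Subtype.val '' S, by simp, ?_, Set.ncard_image_of_injective S Subtype.val_injective⟩
    rintro _ ⟨a, ha, rfl⟩ _ ⟨b, hb, rfl⟩ hab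
    exact hS ha hb (fun h => hab (congrArg Subtype.val h))
  · rintro ⟨S, hSW, hS, rfl⟩
    refine ⟨Subtype.val ⁻¹' S, Set.subset_univ _, fun a ha b hb hab => ?_, ?_⟩
    · exact hS ha hb (Subtype.val_injective.ne hab)
    · exact Set.ncard_preimage_of_injective_subset_range Subtype.val_injective (by simpa using hSW)

lemma alphaNum_induce (W : Set V) :
    alphaNum (fun a b : W => G.Adj a.1 b.1) = G.indepNumOn W :=
  ((G.induce W).alphaNum_adj).trans (G.indepNumOn_induce_univ W)

lemma IsIndepSet.subsingleton_inter (hS : G.IsIndepSet S) (hK : G.IsClique K) :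
    (S ∩ K).Subsingleton :=
  fun _ ha _ hb => by_contra fun hab => hS ha.1 hb.1 hab (hK ha.2 hb.2 hab)

variable [Finite V]

lemma bddAbove_indepNumOn_set (W : Set V) :
    BddAbove {n | ∃ S ⊆ W, G.IsIndepSet S ∧ S.ncard = n} :=
  ⟨Nat.card V, by rintro n ⟨S, -, -, rfl⟩; exact Set.ncard_le_card S⟩

lemma IsIndepSet.ncard_le_indepNumOn (hS : G.IsIndepSet S) (hSW : S ⊆ W) :
    S.ncard ≤ G.indepNumOn W :=
  le_csSup (bddAbove_indepNumOn_set W) ⟨S, hSW, hS, rfl⟩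

lemma exists_isIndepSet_ncard_eq_indepNumOn (W : Set V) :
    ∃ S ⊆ W, G.IsIndepSet S ∧ S.ncard = G.indepNumOn W :=
  Nat.sSup_mem (s := {n | ∃ S ⊆ W, G.IsIndepSet S ∧ S.ncard = n})
    ⟨0, ∅, Set.empty_subset W, Set.pairwise_empty _, Set.ncard_empty V⟩
    (bddAbove_indepNumOn_set W)

lemma indepNumOn_mono (h : W₁ ⊆ W₂) : G.indepNumOn W₁ ≤ G.indepNumOn W₂ := by
  obtain ⟨S, hSW, hS, hcard⟩ := G.exists_isIndepSet_ncard_eq_indepNumOn W₁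
  exact hcard ▸ hS.ncard_le_indepNumOn (hSW.trans h)

lemma indepNumOn_union_le (W₁ W₂ : Set V) :
    G.indepNumOn (W₁ ∪ W₂) ≤ G.indepNumOn W₁ + G.indepNumOn W₂ := by
  obtain ⟨S, hSW, hS, hcard⟩ := G.exists_isIndepSet_ncard_eq_indepNumOn (W₁ ∪ W₂)
  calc G.indepNumOn (W₁ ∪ W₂) = S.ncard := hcard.symm
    _ ≤ (S ∩ W₁).ncard + (S \ W₁).ncard := (Set.ncard_inter_add_ncard_sdiff_eq_ncard S W₁).ge
    _ ≤ G.indepNumOn W₁ + G.indepNumOn W₂ := by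
      gcongr
      · exact IsIndepSet.ncard_le_indepNumOn (hS.mono Set.inter_subset_left)
          Set.inter_subset_right
      · exact IsIndepSet.ncard_le_indepNumOn (hS.mono Set.sdiff_subset)
          fun x hx => (hSW hx.1).resolve_left hx.2

lemma indepNumOn_add_indepNumOn_le (hd : Disjoint W₁ W₂)
    (hW : ∀ a ∈ W₁, ∀ b ∈ W₂, ¬G.Adj a b) :
    G.indepNumOn W₁ + G.indepNumOn W₂ ≤ G.indepNumOn (W₁ ∪ W₂) := by
  obtain ⟨S₁, hSW₁, hS₁, hcard₁⟩ := G.exists_isIndepSet_ncard_eq_indepNumOn W₁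
  obtain ⟨S₂, hSW₂, hS₂, hcard₂⟩ := G.exists_isIndepSet_ncard_eq_indepNumOn W₂
  have hS : G.IsIndepSet (S₁ ∪ S₂) :=
    Set.pairwise_union.2 ⟨hS₁, hS₂, fun a ha b hb _ =>
      ⟨hW a (hSW₁ ha) b (hSW₂ hb), fun hba => hW a (hSW₁ ha) b (hSW₂ hb) hba.symm⟩⟩
  rw [← hcard₁, ← hcard₂, ← Set.ncard_union_eq (hd.mono hSW₁ hSW₂)]
  exact hS.ncard_le_indepNumOn (Set.union_subset_union hSW₁ hSW₂)

lemma indepNumOn_union_le_of_isClique (hK : G.IsClique K)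
    (h : ∀ s ∈ K, G.indepNumOn (insert s W) ≤ G.indepNumOn W) :
    G.indepNumOn (W ∪ K) ≤ G.indepNumOn W := by
  obtain ⟨S, hSW, hS, hcard⟩ := G.exists_isIndepSet_ncard_eq_indepNumOn (W ∪ K)
  rw [← hcard]
  have hSsub : S ⊆ W ∪ S ∩ K := fun x hx => (hSW hx).imp id fun hxK => ⟨hx, hxK⟩
  rcases (hS.subsingleton_inter hK).eq_empty_or_singleton with hSK | ⟨s, hSK⟩
  · rw [hSK, Set.union_empty] at hSsub
    exact hS.ncard_le_indepNumOn hSsub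
  · rw [hSK, Set.union_singleton] at hSsub
    exact (hS.ncard_le_indepNumOn hSsub).trans (h s (hSK.symm.subset rfl).2)

/-- A maximum independent set `T` of `G - (C ∪ A)` meets `K` in at most one vertex, and `T \ K`
has no neighbour in `C ∪ (T ∩ K)`. -/
lemma indepNumOn_add_indepNumOn_compl_le (hK : G.IsClique K)
    (hC : ∀ a ∈ C, ∀ b, G.Adj a b → b ∈ C ∪ K)
    (hA : ∀ s ∈ K \ A, G.indepNumOn C < G.indepNumOn (insert s C)) :
    G.indepNumOn C + G.indepNumOn (C ∪ A)ᶜ ≤ G.indepNumOn Set.univ := by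
  obtain ⟨T, hTA, hT, hcard⟩ := G.exists_isIndepSet_ncard_eq_indepNumOn (C ∪ A)ᶜ
  rw [← hcard]
  have hTC : ∀ x ∈ T, x ∉ C := fun x hx hxC => hTA hx (Or.inl hxC)
  have hgain : G.indepNumOn C + (T ∩ K).ncard ≤ G.indepNumOn (C ∪ T ∩ K) := by
    rcases (hT.subsingleton_inter hK).eq_empty_or_singleton with hTK | ⟨s, hTK⟩
    · simp [hTK]
    · have hs : s ∈ T ∩ K := hTK.symm.subset rfl
      rw [hTK, Set.ncard_singleton, Set.union_singleton]
      exact hA s ⟨hs.2, fun hsA => hTA hs.1 (Or.inr hsA)⟩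
  have hdisj : Disjoint (C ∪ T ∩ K) (T \ K) :=
    Set.disjoint_union_left.2 ⟨Set.disjoint_left.2 fun x hxC hx => hTC x hx.1 hxC,
      Set.disjoint_left.2 fun x hx hx' => hx'.2 hx.2⟩
  have hnoAdj : ∀ a ∈ C ∪ T ∩ K, ∀ b ∈ T \ K, ¬G.Adj a b := by
    rintro a (haC | ⟨haT, haK⟩) b ⟨hbT, hbK⟩ hab
    · exact hbK ((hC a haC b hab).resolve_left (hTC b hbT))
    · exact hT haT hbT (fun h => hbK (h ▸ haK)) hab
  calc G.indepNumOn C + T.ncard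
      = G.indepNumOn C + (T ∩ K).ncard + (T \ K).ncard := by
        rw [add_assoc, Set.ncard_inter_add_ncard_sdiff_eq_ncard]
    _ ≤ G.indepNumOn (C ∪ T ∩ K) + G.indepNumOn (T \ K) :=
        add_le_add hgain (IsIndepSet.ncard_le_indepNumOn (hT.mono Set.sdiff_subset) subset_rfl)
    _ ≤ G.indepNumOn Set.univ :=
        (indepNumOn_add_indepNumOn_le hdisj hnoAdj).trans (indepNumOn_mono (Set.subset_univ _))

theorem exists_indepNumOn_univ_eq_add_compl (hK : G.IsClique K) (hCne : C.Nonempty)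
    (hCK : (C ∪ K)ᶜ.Nonempty) (hC : ∀ a ∈ C, ∀ b, G.Adj a b → b ∈ C ∪ K) :
    ∃ H : Set V, H.Nonempty ∧ Hᶜ.Nonempty ∧
      G.indepNumOn Set.univ = G.indepNumOn H + G.indepNumOn Hᶜ ∧
      ∀ u ∈ H, ∀ v ∉ H, G.Adj u v → u ∈ K ∨ v ∈ K := by
  set A := {s ∈ K | G.indepNumOn (insert s C) ≤ G.indepNumOn C}
  have hAC : G.indepNumOn (C ∪ A) ≤ G.indepNumOn C :=
    indepNumOn_union_le_of_isClique (hK.subset (Set.sep_subset K _)) fun s hs => hs.2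
  have hKA : ∀ s ∈ K \ A, G.indepNumOn C < G.indepNumOn (insert s C) :=
    fun s hs => not_le.1 fun h => hs.2 ⟨hs.1, h⟩
  refine ⟨C ∪ A, hCne.mono Set.subset_union_left,
    hCK.mono (Set.compl_subset_compl.2 (Set.union_subset_union_right C (Set.sep_subset K _))),
    le_antisymm ?_ ?_, ?_⟩
  · rw [← Set.union_compl_self (C ∪ A)]
    exact indepNumOn_union_le (C ∪ A) (C ∪ A)ᶜ
  · exact (add_le_add_left hAC _).trans (indepNumOn_add_indepNumOn_compl_le hK hC hKA)
  · rintro u (huC | huA) v hv huv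
    · exact Or.inr ((hC u huC v huv).resolve_left fun hvC => hv (Or.inl hvC))
    · exact Or.inl huA.1

end SimpleGraph

open SimpleGraph in
/-- If `B` is a clique cut of a graph `G` (or `G` is disconnected and `B` is any
clique), then `G` splits into two proper induced subgraphs `H1, H2` with
`α(G) = α(H1) + α(H2)`, and every edge between `H1` and `H2` meets `B`. -/
theorem clique_cut_partition {V : Type*} [Finite V] (G : SimpleGraph V) (B : Set V)
    (hclique : G.IsClique B)
    (hcut : ¬ G.Preconnected ∨ ¬ (G.induce Bᶜ).Preconnected) :
    ∃ H1 H2 : Set V, H1.Nonempty ∧ H2.Nonempty ∧ Disjoint H1 H2 ∧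
      H1 ∪ H2 = Set.univ ∧
      alphaNum G.Adj =
        alphaNum (fun a b : H1 => G.Adj a.1 b.1) +
          alphaNum (fun a b : H2 => G.Adj a.1 b.1) ∧
      ∀ u v : V, G.Adj u v → u ∈ H1 → v ∈ H2 → u ∈ B ∨ v ∈ B := by
  obtain ⟨C, K, hK, hKB, hCne, hCK, hC⟩ : ∃ C K : Set V, G.IsClique K ∧ K ⊆ B ∧ C.Nonempty ∧
      (C ∪ K)ᶜ.Nonempty ∧ ∀ a ∈ C, ∀ b, G.Adj a b → b ∈ C ∪ K := by
    rcases hcut with h | h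
    · obtain ⟨C, hCne, hCc, hC⟩ := G.exists_adj_closed_of_not_preconnected h
      exact ⟨C, ∅, G.isClique_empty, Set.empty_subset B, hCne, by simpa using hCc,
        by simpa using hC⟩
    · obtain ⟨C, hCne, hCB, hC⟩ := G.exists_adj_closed_of_not_preconnected_induce_compl h
      exact ⟨C, B, hclique, subset_rfl, hCne, hCB, hC⟩
  obtain ⟨H, hH, hHc, hα, hcross⟩ := exists_indepNumOn_univ_eq_add_compl hK hCne hCK hC
  refine ⟨H, Hᶜ, hH, hHc, disjoint_compl_right, Set.union_compl_self H, ?_,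
    fun u v huv hu hv => (hcross u hu v hv huv).imp (@hKB u) (@hKB v)⟩
  rw [alphaNum_adj, alphaNum_induce, alphaNum_induce]
  exact hα
end

section
/- If D is a digraph with no induced anti-directed odd cycle and the underlying graph of D is a cycle, then D is α-diperfect. -/
open Relation

variable {V : Type*}

/-!
Label the vertices by `ZMod n` along the cycle. A proper induced subdigraph is a disjoint union of
paths, and a maximum stable set `S` of it is covered greedily by blocks `{w}` or `{w, w + 1}`
(the latter spanned by an arc), each meeting `S` once. For the whole cycle it suffices to find a
directed path on a run of consecutive vertices meeting `S` exactly once such that the rest of the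
cycle, a path, has stability number less than `|S|`. For `n` even take an arc `{c, c + 1}` with
`c ∈ S`. For `n = 2k + 1` counting forces `S = {d + 2, d + 4, …, d + 2k}` for some `d`, and any of
`d, d + 1, d + 2, …, d + 2k` that is neither a source nor a sink is the middle vertex of a directed
path `z ∓ 1, z, z ± 1` meeting `S` once. If there is no such vertex, `D` itself is an
anti-directed odd cycle (for `n = 3`, a triangle, this cannot happen).
-/

open Set

section Digraph

variable {A : V → V → Prop}

lemma IsStable.subset {S T : Set V} (hT : IsStable A T) (h : S ⊆ T) : IsStable A S :=
  fun u hu v hv => hT u (h hu) v (h hv)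

lemma IsStable.insert {T : Set V} {w : V} (hT : IsStable A T) (hw : ∀ u ∈ T, ¬ DAdj A w u) :
    IsStable A (insert w T) := by
  rintro u (rfl | hu) v (rfl | hv) huv huvA
  · exact huv rfl
  · exact hw v hv huvA
  · exact hw u hu (Or.symm huvA)
  · exact hT u hu v hv huv huvA

lemma DAdj.not_isSource_and_isSource {u v : V} (h : DAdj A u v) :
    ¬ (IsSource A u ∧ IsSource A v) :=
  fun ⟨hu, hv⟩ => h.elim (hv u) (hu v)

lemma DAdj.not_isSink_and_isSink {u v : V} (h : DAdj A u v) : ¬ (IsSink A u ∧ IsSink A v) :=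
  fun ⟨hu, hv⟩ => h.elim (hu v) (hv u)

lemma exists_not_isSource_or_isSink_of_triangle {u v w : V} (huv : DAdj A u v)
    (hvw : DAdj A v w) (hwu : DAdj A w u) :
    ¬ (IsSource A u ∨ IsSink A u) ∨ ¬ (IsSource A v ∨ IsSink A v) ∨
      ¬ (IsSource A w ∨ IsSink A w) := by
  by_contra! h
  obtain ⟨hu | hu, hv | hv, hw | hw⟩ := h
  all_goals first
    | exact huv.not_isSource_and_isSource ⟨hu, hv⟩ | exact huv.not_isSink_and_isSink ⟨hu, hv⟩
    | exact hvw.not_isSource_and_isSource ⟨hv, hw⟩ | exact hvw.not_isSink_and_isSink ⟨hv, hw⟩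
    | exact hwu.not_isSource_and_isSource ⟨hw, hu⟩ | exact hwu.not_isSink_and_isSink ⟨hw, hu⟩

lemma exists_isDiPath_pair {u v : V} (h : DAdj A u v) (huv : u ≠ v) :
    ∃ l, IsDiPath A l ∧ ∀ x, x ∈ l ↔ x = u ∨ x = v := by
  rcases h with h | h
  · exact ⟨[u, v], ⟨by simp, by simpa using huv, List.isChain_pair.2 h⟩, by simp⟩
  · exact ⟨[v, u], ⟨by simp, by simpa using huv.symm, List.isChain_pair.2 h⟩, by simp [or_comm]⟩

def IsMaxStableIn (A : V → V → Prop) (W S : Set V) : Prop :=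
  S ⊆ W ∧ IsStable A S ∧ ∀ T ⊆ W, IsStable A T → T.ncard ≤ S.ncard

/-- An `S`-path partition of the subdigraph induced by `W`, with the paths kept as lists in `V`
so that `W` can shrink in a recursion. -/
structure IsSPartitionOn (A : V → V → Prop) (W S : Set V) (P : Set (List V)) : Prop where
  isDiPath : ∀ l ∈ P, IsDiPath A l
  subset : ∀ l ∈ P, ∀ v ∈ l, v ∈ W
  existsUnique_path : ∀ v ∈ W, ∃! l, l ∈ P ∧ v ∈ l
  existsUnique_mem : ∀ l ∈ P, ∃! s, s ∈ l ∧ s ∈ S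

lemma isSPartitionOn_empty (S : Set V) : IsSPartitionOn A ∅ S ∅ :=
  ⟨by simp, by simp, by simp, by simp⟩

lemma IsSPartitionOn.insert {W S : Set V} {P : Set (List V)} {l : List V}
    (hP : IsSPartitionOn A (W \ {v | v ∈ l}) (S \ {v | v ∈ l}) P) (hl : IsDiPath A l)
    (hlW : ∀ v ∈ l, v ∈ W) (hlS : ∃! s, s ∈ l ∧ s ∈ S) :
    IsSPartitionOn A W S (insert l P) where
  isDiPath := by
    rintro l' (rfl | hl')
    exacts [hl, hP.isDiPath l' hl']
  subset := by
    rintro l' (rfl | hl') v hv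
    exacts [hlW v hv, (hP.subset l' hl' v hv).1]
  existsUnique_path := by
    intro v hv
    by_cases hvl : v ∈ l
    · refine ⟨l, ⟨mem_insert _ _, hvl⟩, ?_⟩
      rintro l' ⟨rfl | hl', hvl'⟩
      · rfl
      · exact absurd hvl (hP.subset l' hl' v hvl').2
    · obtain ⟨l', ⟨hl', hvl'⟩, huniq⟩ := hP.existsUnique_path v ⟨hv, hvl⟩
      refine ⟨l', ⟨mem_insert_of_mem _ hl', hvl'⟩, ?_⟩
      rintro l'' ⟨rfl | hl'', hvl''⟩
      · exact absurd hvl'' hvl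
      · exact huniq l'' ⟨hl'', hvl''⟩
  existsUnique_mem := by
    rintro l' (rfl | hl')
    · exact hlS
    · obtain ⟨s, ⟨hsl, hsS⟩, huniq⟩ := hP.existsUnique_mem l' hl'
      refine ⟨s, ⟨hsl, hsS.1⟩, fun s' ⟨hs'l, hs'S⟩ => huniq s' ⟨hs'l, hs'S, ?_⟩⟩
      exact (hP.subset l' hl' s' hs'l).2

lemma IsMaxStableIn.diff [Finite V] {W S B : Set V} (hS : IsMaxStableIn A W S)
    (hB : ∀ s ∈ B, ∀ s' ∈ B, s ∈ S → s' ∈ S → s = s')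
    (hlt : ∀ T ⊆ W \ B, IsStable A T → T.ncard < S.ncard) :
    (∃! s, s ∈ B ∧ s ∈ S) ∧ IsMaxStableIn A (W \ B) (S \ B) := by
  obtain ⟨hSW, hSst, hSmax⟩ := hS
  obtain ⟨s, hsB, hsS⟩ : ∃ s ∈ B, s ∈ S := by
    by_contra! h
    exact (hlt S (fun v hv => ⟨hSW hv, fun hvB => h v hvB hv⟩) hSst).false
  have hdiff : S \ B = S \ {s} := by
    ext v
    exact ⟨fun ⟨hv, hvB⟩ => ⟨hv, fun hvs => hvB (hvs ▸ hsB)⟩,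
      fun ⟨hv, hvs⟩ => ⟨hv, fun hvB => hvs (hB v hvB s hsB hv hsS)⟩⟩
  have hcard : (S \ B).ncard + 1 = S.ncard := by
    rw [hdiff, ncard_sdiff_singleton_add_one hsS]
  refine ⟨⟨s, ⟨hsB, hsS⟩, fun s' hs' => hB _ hs'.1 _ hsB hs'.2 hsS⟩,
    sdiff_subset_sdiff_left hSW, hSst.subset sdiff_subset, fun T hT hTst => ?_⟩
  have := hlt T hT hTst
  omega

lemma exists_isSPartitionOn_of_peel [Finite V] {W S : Set V} {l : List V}
    (hS : IsMaxStableIn A W S) (hl : IsDiPath A l) (hlW : ∀ v ∈ l, v ∈ W)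
    (hlS : ∀ s ∈ l, ∀ s' ∈ l, s ∈ S → s' ∈ S → s = s')
    (hlt : ∀ T ⊆ W \ {v | v ∈ l}, IsStable A T → T.ncard < S.ncard)
    (hrest : IsMaxStableIn A (W \ {v | v ∈ l}) (S \ {v | v ∈ l}) →
      ∃ P, IsSPartitionOn A (W \ {v | v ∈ l}) (S \ {v | v ∈ l}) P) :
    ∃ P, IsSPartitionOn A W S P := by
  obtain ⟨hone, hmax⟩ := hS.diff hlS hlt
  obtain ⟨P, hP⟩ := hrest hmax
  exact ⟨insert l P, hP.insert hl hlW hone⟩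

end Digraph

section Transfer

variable {α β : Type*} {r : α → α → Prop} {s : β → β → Prop}

lemma RelEmbedding.dAdj_iff (f : r ↪r s) {a b : α} : DAdj s (f a) (f b) ↔ DAdj r a b := by
  simp only [DAdj, f.map_rel_iff]

lemma IsMaxStable.image (f : r ↪r s) {S : Set α} (hS : IsMaxStable r S) :
    IsMaxStableIn s (range f) (f '' S) := by
  refine ⟨image_subset_range f S, ?_, fun T hT hTst => ?_⟩
  · rintro _ ⟨a, ha, rfl⟩ _ ⟨b, hb, rfl⟩ hab
    rw [f.dAdj_iff]
    exact hS.1 a ha b hb (ne_of_apply_ne f hab)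
  · have hpre : IsStable r (f ⁻¹' T) := fun a ha b hb hab => by
      rw [← f.dAdj_iff]
      exact hTst _ ha _ hb (f.injective.ne hab)
    rw [ncard_image_of_injective S f.injective,
      ← ncard_preimage_of_injective_subset_range f.injective hT]
    exact hS.2 _ hpre

lemma IsSPartitionOn.preimage (f : r ↪r s) {S : Set α} {P : Set (List β)}
    (hP : IsSPartitionOn s (range f) (f '' S) P) :
    IsSPartition r S {l | l.map f ∈ P} := by
  have hlift : ∀ l ∈ P, l ∈ range (List.map f) := fun l hl => by
    rw [range_list_map]
    exact hP.subset l hl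
  have hmap : Function.Injective (List.map f) := List.map_injective_iff.2 f.injective
  refine ⟨⟨fun l hl => ?_, fun v => ?_⟩, fun l hl => ?_⟩
  · obtain ⟨hne, hnd, hch⟩ := hP.isDiPath _ hl
    refine ⟨by simpa using hne, hnd.of_map f, ?_⟩
    exact List.isChain_of_isChain_map f (fun a b => f.map_rel_iff.1) hch
  · obtain ⟨l, ⟨hl, hvl⟩, huniq⟩ := hP.existsUnique_path (f v) (mem_range_self v)
    obtain ⟨l', rfl⟩ := hlift l hl
    refine ⟨l', ⟨hl, ?_⟩, fun l'' ⟨hl'', hvl''⟩ => hmap (huniq _ ⟨hl'', ?_⟩)⟩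
    · simpa [f.injective.eq_iff] using hvl
    · exact List.mem_map_of_mem hvl''
  · obtain ⟨_, ⟨hsl, a, ha, rfl⟩, huniq⟩ := hP.existsUnique_mem _ hl
    refine ⟨a, ⟨?_, ha⟩, fun b ⟨hbl, hb⟩ => f.injective ?_⟩
    · simpa [f.injective.eq_iff] using hsl
    · exact huniq (f b) ⟨List.mem_map_of_mem hbl, b, hb, rfl⟩

lemma alphaProperty_of_relEmbedding (f : r ↪r s)
    (h : ∀ S, IsMaxStableIn s (range f) S → ∃ P, IsSPartitionOn s (range f) S P) :
    AlphaProperty r := fun _ hS =>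
  let ⟨_, hP⟩ := h _ (hS.image f)
  ⟨_, hP.preimage f⟩

lemma RelIso.isSource_iff (f : r ≃r s) {a : α} : IsSource s (f a) ↔ IsSource r a := by
  simp only [IsSource, f.surjective.forall, f.map_rel_iff]

lemma RelIso.isSink_iff (f : r ≃r s) {a : α} : IsSink s (f a) ↔ IsSink r a := by
  simp only [IsSink, f.surjective.forall, f.map_rel_iff]

lemma IsAntiDirectedOddCycle.of_relIso (f : r ≃r s) (h : IsAntiDirectedOddCycle s) :
    IsAntiDirectedOddCycle r := by
  obtain ⟨k, x, hk, hx, hadj, hend⟩ := h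
  refine ⟨k, f.symm ∘ x, hk, f.symm.bijective.comp hx, fun i j => ?_, fun m hm hm' => ?_⟩
  · exact f.symm.toRelEmbedding.dAdj_iff.trans (hadj i j)
  · rw [← f.isSource_iff, ← f.isSink_iff]
    simpa using hend m hm hm'

end Transfer

section CycleZMod

variable {n : ℕ} {A : ZMod n → ZMod n → Prop}

lemma ZMod.natCast_inj_of_lt {a b : ℕ} (ha : a < n) (hb : b < n) :
    (a : ZMod n) = b ↔ a = b := by
  rw [ZMod.natCast_eq_natCast_iff', Nat.mod_eq_of_lt ha, Nat.mod_eq_of_lt hb]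

lemma ZMod.exists_mem_sub_one_notMem [NeZero n] {W : Set (ZMod n)} (hW : W ≠ univ)
    (hne : W.Nonempty) : ∃ w ∈ W, w - 1 ∉ W := by
  by_contra! h
  obtain ⟨w, hw⟩ := hne
  have hsub : ∀ j : ℕ, w - j ∈ W := by
    intro j
    induction j with
    | zero => simpa using hw
    | succ j ih => simpa [sub_sub] using h _ ih
  refine hW (eq_univ_of_forall fun u => ?_)
  simpa using hsub (w - u).val

lemma ZMod.self_ne_add_one (hn : 1 < n) (i : ZMod n) : i ≠ i + 1 := by
  have : ((0 : ℕ) : ZMod n) ≠ (1 : ℕ) := by rw [Ne, ZMod.natCast_inj_of_lt] <;> omega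
  exact fun h => this (by push_cast; linear_combination h)

lemma ZMod.sub_one_ne_add_one (hn : 3 ≤ n) (i : ZMod n) : i - 1 ≠ i + 1 := by
  have : ((0 : ℕ) : ZMod n) ≠ (2 : ℕ) := by rw [Ne, ZMod.natCast_inj_of_lt] <;> omega
  intro h
  exact this (by push_cast; linear_combination h)

open scoped Classical in
noncomputable def runCount (S : Set (ZMod n)) (c : ZMod n) (m : ℕ) : ℕ :=
  ∑ j ∈ Finset.range m, if c + (j : ZMod n) ∈ S then 1 else 0

lemma runCount_add (S : Set (ZMod n)) (c : ZMod n) (a b : ℕ) :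
    runCount S c (a + b) = runCount S c a + runCount S (c + a) b := by
  rw [runCount, runCount, runCount, Finset.sum_range_add]
  congr 1
  refine Finset.sum_congr rfl fun j _ => ?_
  rw [Nat.cast_add, add_assoc]

open scoped Classical in
lemma runCount_one (S : Set (ZMod n)) (c : ZMod n) :
    runCount S c 1 = if c ∈ S then 1 else 0 := by
  rw [runCount, Finset.sum_range_one, Nat.cast_zero, add_zero]

lemma runCount_eq_zero {S : Set (ZMod n)} {c : ZMod n} {m : ℕ}
    (h : ∀ j < m, c + (j : ZMod n) ∉ S) : runCount S c m = 0 :=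
  Finset.sum_eq_zero fun j hj => if_neg (h j (Finset.mem_range.1 hj))

lemma ncard_eq_runCount [NeZero n] (S : Set (ZMod n)) (c : ZMod n) :
    S.ncard = runCount S c n := by
  classical
  rw [ncard_eq_toFinset_card', ← Finset.filter_univ_mem S.toFinset, Finset.card_filter, runCount]
  symm
  refine Finset.sum_nbij' (fun j => c + j) (fun v => (v - c).val) (by simp) ?_ ?_ ?_ (by simp)
  · simp [ZMod.val_lt]
  · intro j hj
    simp [ZMod.val_cast_of_lt (Finset.mem_range.1 hj)]
  · simp

variable (hadj : ∀ i j, DAdj A i j ↔ j = i + 1 ∨ i = j + 1)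
include hadj

lemma dAdj_add_one (i : ZMod n) : DAdj A i (i + 1) := (hadj _ _).2 (Or.inl rfl)

lemma eq_sub_one_or_eq_add_one_of_dAdj {i j : ZMod n} (h : DAdj A i j) :
    j = i - 1 ∨ j = i + 1 := by
  rcases (hadj i j).1 h with h | h
  · exact Or.inr h
  · exact Or.inl (by rw [h]; ring)

lemma IsStable.not_mem_and_add_one_mem (hn : 3 ≤ n) {S : Set (ZMod n)} (hS : IsStable A S)
    (i : ZMod n) : ¬ (i ∈ S ∧ i + 1 ∈ S) :=
  fun ⟨hi, hi1⟩ => hS i hi _ hi1 (ZMod.self_ne_add_one (by omega) i) (dAdj_add_one hadj i)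

lemma exists_isDiPath_self_add_one (hn : 3 ≤ n) {W : Set (ZMod n)} {w : ZMod n} (hw : w ∈ W) :
    ∃ l, IsDiPath A l ∧ w ∈ l ∧ (∀ v ∈ l, v ∈ W ∧ (v = w ∨ v = w + 1)) ∧
      (w + 1 ∈ W → w + 1 ∈ l) := by
  by_cases hw1 : w + 1 ∈ W
  · obtain ⟨l, hl, hmem⟩ :=
      exists_isDiPath_pair (dAdj_add_one hadj w) (ZMod.self_ne_add_one (by omega) w)
    refine ⟨l, hl, (hmem w).2 (Or.inl rfl), fun v hv => ?_, fun _ => (hmem _).2 (Or.inr rfl)⟩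
    rcases (hmem v).1 hv with rfl | rfl
    exacts [⟨hw, Or.inl rfl⟩, ⟨hw1, Or.inr rfl⟩]
  · exact ⟨[w], ⟨by simp, by simp, List.isChain_singleton w⟩, by simp, by simp [hw],
      fun h => absurd h hw1⟩

lemma arcs_through_of_not_isSource_or_isSink {z : ZMod n}
    (hz : ¬ (IsSource A z ∨ IsSink A z)) :
    (A (z - 1) z ∧ A z (z + 1)) ∨ (A (z + 1) z ∧ A z (z - 1)) := by
  simp only [IsSource, IsSink, not_or, not_forall, not_not] at hz
  obtain ⟨⟨u, hu⟩, ⟨u', hu'⟩⟩ := hz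
  have harc : A (z - 1) z ∨ A z (z - 1) := by
    simpa [DAdj] using dAdj_add_one hadj (z - 1)
  have harc' := dAdj_add_one hadj z
  rcases eq_sub_one_or_eq_add_one_of_dAdj hadj (Or.inr hu : DAdj A z u) with rfl | rfl <;>
    rcases eq_sub_one_or_eq_add_one_of_dAdj hadj (Or.inl hu' : DAdj A z u') with rfl | rfl
  · rcases harc' with h | h
    exacts [Or.inl ⟨hu, h⟩, Or.inr ⟨h, hu'⟩]
  · exact Or.inl ⟨hu, hu'⟩
  · exact Or.inr ⟨hu, hu'⟩
  · rcases harc with h | h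
    exacts [Or.inl ⟨h, hu'⟩, Or.inr ⟨hu, h⟩]

lemma exists_isDiPath_triple (hn : 3 ≤ n) {z : ZMod n} (hz : ¬ (IsSource A z ∨ IsSink A z)) :
    ∃ l, IsDiPath A l ∧ ∀ v, v ∈ l ↔ v = z - 1 ∨ v = z ∨ v = z + 1 := by
  have h1 : z - 1 ≠ z := fun h =>
    ZMod.self_ne_add_one (by omega) (z - 1) (by rw [sub_add_cancel, h])
  have h2 := ZMod.self_ne_add_one (by omega) z
  have h3 := ZMod.sub_one_ne_add_one hn z
  rcases arcs_through_of_not_isSource_or_isSink hadj hz with ⟨ha, hb⟩ | ⟨ha, hb⟩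
  · exact ⟨[z - 1, z, z + 1], ⟨by simp, by simp [h1, h2, h3],
      List.isChain_cons_cons.2 ⟨ha, List.isChain_pair.2 hb⟩⟩, by simp⟩
  · exact ⟨[z + 1, z, z - 1], ⟨by simp, by simp [h1.symm, h2.symm, h3.symm],
      List.isChain_cons_cons.2 ⟨ha, List.isChain_pair.2 hb⟩⟩, by simp; tauto⟩

lemma runCount_le (hn : 3 ≤ n) {S : Set (ZMod n)} (hS : IsStable A S) (c : ZMod n) :
    ∀ m, runCount S c m ≤ (m + 1) / 2
  | 0 => by simp [runCount]
  | 1 => by rw [runCount_one]; split_ifs <;> simp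
  | m + 2 => by
    have ih := runCount_le hn hS c m
    have hpair := hS.not_mem_and_add_one_mem hadj hn (c + m)
    rw [show m + 2 = m + 1 + 1 from rfl, runCount_add, runCount_add, runCount_one, runCount_one,
      Nat.cast_add, Nat.cast_one, ← add_assoc]
    split_ifs <;> simp_all <;> omega

lemma half_le_ncard {S : Set (ZMod n)} (hS : IsMaxStableIn A univ S) :
    n / 2 ≤ S.ncard := by
  classical
  let E := (Finset.range (n / 2)).image fun t : ℕ => ((2 * t : ℕ) : ZMod n)
  have hinj : Set.InjOn (fun t : ℕ => ((2 * t : ℕ) : ZMod n)) (Finset.range (n / 2)) := by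
    intro t ht t' ht' h
    simp only [Finset.coe_range, mem_Iio] at ht ht'
    have := (ZMod.natCast_inj_of_lt (by omega) (by omega)).1 h
    omega
  have hE : IsStable A (E : Set (ZMod n)) := by
    simp only [E, Finset.coe_image, Finset.coe_range]
    rintro _ ⟨t, ht, rfl⟩ _ ⟨t', ht', rfl⟩ - h
    simp only [mem_Iio] at ht ht'
    rcases (hadj _ _).1 h with h | h
    · have h' : ((2 * t' : ℕ) : ZMod n) = ((2 * t + 1 : ℕ) : ZMod n) := by
        push_cast at h ⊢; exact h
      have := (ZMod.natCast_inj_of_lt (by omega) (by omega)).1 h'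
      omega
    · have h' : ((2 * t : ℕ) : ZMod n) = ((2 * t' + 1 : ℕ) : ZMod n) := by
        push_cast at h ⊢; exact h
      have := (ZMod.natCast_inj_of_lt (by omega) (by omega)).1 h'
      omega
  have := hS.2.2 _ (subset_univ _) hE
  rwa [ncard_coe_finset, Finset.card_image_of_injOn hinj, Finset.card_range] at this

lemma exists_notMem_and_add_one_notMem_of_odd (hn : 3 ≤ n) {k : ℕ} (hk : n = 2 * k + 1)
    {S : Set (ZMod n)} (hS : IsStable A S) : ∃ d, d ∉ S ∧ d + 1 ∉ S := by
  by_contra! h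
  have hnot := hS.not_mem_and_add_one_mem hadj hn
  have hstep : ∀ v ∈ S, v + 2 ∈ S := fun v hv => by
    simpa [add_assoc, one_add_one_eq_two] using h (v + 1) fun hv1 => hnot v ⟨hv, hv1⟩
  obtain ⟨c, hc⟩ : S.Nonempty := by
    by_cases h0 : (0 : ZMod n) ∈ S
    exacts [⟨0, h0⟩, ⟨1, by simpa using h 0 h0⟩]
  have hall : ∀ j : ℕ, c + 2 * (j : ZMod n) ∈ S := by
    intro j
    induction j with
    | zero => simpa using hc
    | succ j ih => simpa [mul_add, add_assoc] using hstep _ ih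
  have h0 : ((2 * k + 1 : ℕ) : ZMod n) = 0 := hk ▸ ZMod.natCast_self n
  have hwrap : c + 2 * ((k + 1 : ℕ) : ZMod n) = c + 1 := by
    push_cast at h0 ⊢
    linear_combination h0
  exact hnot c ⟨hc, hwrap ▸ hall (k + 1)⟩

/-- The labelling `m ↦ d + m - 1` starts the cycle at `d - 1 = d + 2k`; the vertices it requires
to be sources or sinks are then `d + 1` and the `d + 2t` with `t ≤ k`. -/
lemma isAntiDirectedOddCycle_of_gap {k : ℕ} (hk : n = 2 * k + 1) (hk2 : 2 ≤ k) (d : ZMod n)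
    (hd1 : IsSource A (d + 1) ∨ IsSink A (d + 1))
    (ht : ∀ t ≤ k, IsSource A (d + 2 * (t : ZMod n)) ∨ IsSink A (d + 2 * (t : ZMod n))) :
    IsAntiDirectedOddCycle A := by
  subst hk
  refine ⟨k, fun m => d + m - 1, hk2, ((Equiv.addLeft d).trans (Equiv.subRight 1)).bijective,
    fun i j => ?_, fun m hm hsel => ?_⟩
  · rw [hadj]
    constructor <;> rintro (h | h)
    exacts [Or.inl (by linear_combination h), Or.inr (by linear_combination h),
      Or.inl (by linear_combination h), Or.inr (by linear_combination h)]
  · rcases hsel with hm3 | ⟨-, -, j, rfl⟩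
    · interval_cases m
      · have h0 : ((2 * k + 1 : ℕ) : ZMod (2 * k + 1)) = 0 := ZMod.natCast_self _
        convert ht k le_rfl using 2 <;> push_cast at h0 ⊢ <;> linear_combination -h0
      · simpa using ht 0 (Nat.zero_le k)
      · convert hd1 using 2 <;> push_cast <;> ring
      · convert ht 1 (by omega) using 2 <;> push_cast <;> ring
    · convert ht j (by omega) using 2 <;> push_cast <;> ring

variable [NeZero n]

/-- Every proper induced subdigraph of the cycle is a disjoint union of paths; peel them
greedily, starting from a vertex whose predecessor is missing. -/
theorem exists_isSPartitionOn_of_ne_univ (hn : 3 ≤ n) {W S : Set (ZMod n)} (hW : W ≠ univ)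
    (hS : IsMaxStableIn A W S) : ∃ P, IsSPartitionOn A W S P := by
  induction hc : W.ncard using Nat.strong_induction_on generalizing W S with
  | _ N ih =>
  rcases W.eq_empty_or_nonempty with rfl | hne
  · obtain rfl : S = ∅ := subset_empty_iff.1 hS.1
    exact ⟨∅, isSPartitionOn_empty ∅⟩
  obtain ⟨w, hw, hw1⟩ := ZMod.exists_mem_sub_one_notMem hW hne
  obtain ⟨l, hl, hwl, hlW, hw1l⟩ := exists_isDiPath_self_add_one hadj hn hw
  have hwL : w ∉ W \ {v | v ∈ l} := fun h => h.2 hwl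
  refine exists_isSPartitionOn_of_peel hS hl (fun v hv => (hlW v hv).1) ?_ ?_
    fun hmax => ih _ ?_ (fun h => hwL (h ▸ mem_univ w)) hmax rfl
  · intro s hs s' hs' hsS hs'S
    rcases (hlW s hs).2 with rfl | rfl <;> rcases (hlW s' hs').2 with rfl | rfl
    exacts [rfl, (hS.2.1.not_mem_and_add_one_mem hadj hn _ ⟨hsS, hs'S⟩).elim,
      (hS.2.1.not_mem_and_add_one_mem hadj hn _ ⟨hs'S, hsS⟩).elim, rfl]
  · intro T hT hTst
    have hwT : w ∉ T := fun h => hwL (hT h)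
    have hins : IsStable A (insert w T) := hTst.insert fun u hu hwu => by
      rcases eq_sub_one_or_eq_add_one_of_dAdj hadj hwu with rfl | rfl
      exacts [hw1 (hT hu).1, (hT hu).2 (hw1l (hT hu).1)]
    have := hS.2.2 _ (insert_subset hw fun u hu => (hT hu).1) hins
    rw [ncard_insert_of_notMem hwT] at this
    omega
  · rw [← hc]
    exact ncard_lt_ncard ⟨sdiff_subset, fun h => hwL (h hw)⟩

/-- Removing the run leaves a path on `n - m` vertices, whose stable sets have at most
`(n - m + 1) / 2` vertices. -/
theorem exists_isSPartitionOn_univ_of_run (hn : 3 ≤ n) {S : Set (ZMod n)}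
    (hS : IsMaxStableIn A univ S) {l : List (ZMod n)} (hl : IsDiPath A l) {c : ZMod n} {m : ℕ}
    (hmn : m ≤ n) (hrun : ∀ j < m, c + (j : ZMod n) ∈ l)
    (hlS : ∀ s ∈ l, ∀ s' ∈ l, s ∈ S → s' ∈ S → s = s') (hcard : (n - m + 1) / 2 < S.ncard) :
    ∃ P, IsSPartitionOn A univ S P := by
  obtain ⟨v, hv⟩ := List.exists_mem_of_ne_nil l hl.1
  refine exists_isSPartitionOn_of_peel hS hl (fun v _ => mem_univ v) hlS (fun T hT hTst => ?_)
    fun hmax => exists_isSPartitionOn_of_ne_univ hadj hn (fun h => (h ▸ mem_univ v).2 hv) hmax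
  have hsplit : runCount T c n = runCount T c m + runCount T (c + m) (n - m) := by
    rw [← runCount_add, Nat.add_sub_cancel' hmn]
  rw [ncard_eq_runCount T c, hsplit, runCount_eq_zero fun j hj hjT => (hT hjT).2 (hrun j hj)]
  have := runCount_le hadj hn hTst (c + m) (n - m)
  omega

theorem exists_isSPartitionOn_univ_of_triple (hn : 3 ≤ n) {S : Set (ZMod n)}
    (hS : IsMaxStableIn A univ S) {z : ZMod n} (hz : ¬ (IsSource A z ∨ IsSink A z))
    (hzS : ¬ (z - 1 ∈ S ∧ z + 1 ∈ S)) (hcard : (n - 2) / 2 < S.ncard) :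
    ∃ P, IsSPartitionOn A univ S P := by
  obtain ⟨l, hl, hmem⟩ := exists_isDiPath_triple hadj hn hz
  have hnot := hS.2.1.not_mem_and_add_one_mem hadj hn
  refine exists_isSPartitionOn_univ_of_run hadj hn hS hl (c := z - 1) (m := 3) hn ?_ ?_
    (by omega)
  · intro j hj
    rw [hmem]
    interval_cases j
    · exact Or.inl (by simp)
    · exact Or.inr (Or.inl (by push_cast; ring))
    · exact Or.inr (Or.inr (by push_cast; ring))
  · intro s hs s' hs' hsS hs'S
    rw [hmem] at hs hs'
    rcases hs with rfl | rfl | rfl <;> rcases hs' with rfl | rfl | rfl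
    all_goals first
      | rfl
      | exact (hnot _ ⟨hsS, by simpa using hs'S⟩).elim
      | exact (hnot _ ⟨hs'S, by simpa using hsS⟩).elim
      | exact (hnot _ ⟨by simpa using hsS, hs'S⟩).elim
      | exact (hnot _ ⟨by simpa using hs'S, hsS⟩).elim
      | exact (hzS ⟨hsS, hs'S⟩).elim
      | exact (hzS ⟨hs'S, hsS⟩).elim

theorem exists_isSPartitionOn_univ_of_even (hn : 3 ≤ n) (heven : Even n) {S : Set (ZMod n)}
    (hS : IsMaxStableIn A univ S) : ∃ P, IsSPartitionOn A univ S P := by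
  have hcard := half_le_ncard hadj hS
  obtain ⟨c, hc⟩ : S.Nonempty := nonempty_of_ncard_ne_zero (by omega)
  obtain ⟨l, hl, hmem⟩ :=
    exists_isDiPath_pair (dAdj_add_one hadj c) (ZMod.self_ne_add_one (by omega) c)
  have hc1 : c + 1 ∉ S := fun h => hS.2.1.not_mem_and_add_one_mem hadj hn c ⟨hc, h⟩
  refine exists_isSPartitionOn_univ_of_run hadj hn hS hl (c := c) (m := 2) (by omega) ?_ ?_ ?_
  · intro j hj
    interval_cases j <;> simp [hmem]
  · intro s hs s' hs' hsS hs'S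
    rcases (hmem s).1 hs with rfl | rfl
    · rcases (hmem s').1 hs' with rfl | rfl
      exacts [rfl, absurd hs'S hc1]
    · exact absurd hsS hc1
  · obtain ⟨k, rfl⟩ := heven
    omega

lemma add_two_mul_mem_of_gap {k : ℕ} (hk : n = 2 * k + 1) {S : Set (ZMod n)}
    (hS : IsMaxStableIn A univ S) {d : ZMod n} (hd : d ∉ S) (hd1 : d + 1 ∉ S) {t : ℕ}
    (ht1 : 1 ≤ t) (htk : t ≤ k) : d + 2 * (t : ZMod n) ∈ S := by
  have hn : 3 ≤ n := by omega
  by_contra h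
  obtain ⟨s, rfl⟩ : ∃ s, t = s + 1 := ⟨t - 1, by omega⟩
  obtain ⟨r, rfl⟩ : ∃ r, k = s + 1 + r := ⟨k - (s + 1), by omega⟩
  have hsplit : runCount S d n = runCount S d 2 + runCount S (d + 2) (2 * s) +
      runCount S (d + 2 + (2 * s : ℕ)) 1 + runCount S (d + 2 + (2 * s : ℕ) + 1) (2 * r) := by
    rw [congrArg (runCount S d) (by omega : n = 2 + 2 * s + 1 + 2 * r), runCount_add,
      runCount_add, runCount_add]
    simp only [Nat.cast_add, Nat.cast_mul, Nat.cast_ofNat, Nat.cast_one, add_assoc]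
  have hgap : runCount S d 2 = 0 := runCount_eq_zero fun j hj => by
    interval_cases j
    exacts [by simpa using hd, by simpa using hd1]
  have hmid : runCount S (d + 2 + (2 * s : ℕ)) 1 = 0 := by
    rw [runCount_one, if_neg]
    convert h using 2
    push_cast
    ring
  have := runCount_le hadj hn hS.2.1 (d + 2) (2 * s)
  have := runCount_le hadj hn hS.2.1 (d + 2 + (2 * s : ℕ) + 1) (2 * r)
  have := half_le_ncard hadj hS
  rw [ncard_eq_runCount S d, hsplit] at this
  omega

theorem exists_isSPartitionOn_univ_of_odd (hanti : ¬ IsAntiDirectedOddCycle A) (hn : 3 ≤ n)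
    {k : ℕ} (hk : n = 2 * k + 1) {S : Set (ZMod n)} (hS : IsMaxStableIn A univ S) :
    ∃ P, IsSPartitionOn A univ S P := by
  have hcard := half_le_ncard hadj hS
  have hnot := hS.2.1.not_mem_and_add_one_mem hadj hn
  obtain ⟨d, hd, hd1⟩ := exists_notMem_and_add_one_notMem_of_odd hadj hn hk hS.2.1
  by_contra hP
  have hend : ∀ z : ZMod n, ¬ (z - 1 ∈ S ∧ z + 1 ∈ S) → IsSource A z ∨ IsSink A z :=
    fun z hzS => not_not.1 fun hz =>
      hP (exists_isSPartitionOn_univ_of_triple hadj hn hS hz hzS (by omega))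
  have hd1' : IsSource A (d + 1) ∨ IsSink A (d + 1) := hend _ (by simp [hd])
  have ht : ∀ t ≤ k, IsSource A (d + 2 * (t : ZMod n)) ∨ IsSink A (d + 2 * (t : ZMod n)) := by
    intro t htk
    refine hend _ fun h => ?_
    rcases Nat.eq_zero_or_pos t with rfl | ht1
    · exact hd1 (by simpa using h.2)
    · exact hnot _ ⟨add_two_mul_mem_of_gap hadj hk hS hd hd1 ht1 htk, h.2⟩
  rcases (by omega : k = 1 ∨ 2 ≤ k) with rfl | hk2
  · have hwrap : d + 2 * ((1 : ℕ) : ZMod n) + 1 = d := by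
      have h0 : ((3 : ℕ) : ZMod n) = 0 := hk ▸ ZMod.natCast_self n
      push_cast at h0 ⊢
      linear_combination h0
    have h01 := dAdj_add_one hadj d
    have h12 : DAdj A (d + 1) (d + 2 * ((1 : ℕ) : ZMod n)) := by
      simpa [add_assoc, one_add_one_eq_two] using dAdj_add_one hadj (d + 1)
    have h20 := dAdj_add_one hadj (d + 2 * ((1 : ℕ) : ZMod n))
    rw [hwrap] at h20
    rcases exists_not_isSource_or_isSink_of_triangle h01 h12 h20 with h | h | h
    exacts [h (by simpa using ht 0 (Nat.zero_le 1)), h hd1', h (ht 1 le_rfl)]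
  · exact hanti (isAntiDirectedOddCycle_of_gap hadj hk hk2 d hd1' ht)

theorem exists_isSPartitionOn (hanti : ¬ IsAntiDirectedOddCycle A) (hn : 3 ≤ n)
    (W S : Set (ZMod n)) (hS : IsMaxStableIn A W S) : ∃ P, IsSPartitionOn A W S P := by
  by_cases hW : W = univ
  · subst hW
    rcases Nat.even_or_odd' n with ⟨k, hk | hk⟩
    · exact exists_isSPartitionOn_univ_of_even hadj hn ⟨k, by omega⟩ hS
    · exact exists_isSPartitionOn_univ_of_odd hadj hanti hn hk hS
  · exact exists_isSPartitionOn_of_ne_univ hadj hn hW hS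

end CycleZMod

theorem cycle_alphaDiperfect_general {V : Type*} (A : V → V → Prop) (hcyc : UnderlyingIsCycle A)
    (hA : ¬ ∃ W : Set V, IsAntiDirectedOddCycle (fun a b : W => A a.1 b.1)) :
    AlphaDiperfect A := by
  obtain ⟨n, x, hn, hx, hadj⟩ := hcyc
  have : NeZero n := ⟨by omega⟩
  let e := RelIso.preimage (Equiv.ofBijective x hx) A
  have hanti : ¬ IsAntiDirectedOddCycle (Equiv.ofBijective x hx ⁻¹'o A) := fun h =>
    hA ⟨univ, h.of_relIso ((RelIso.subrelUnivIso (p := (· ∈ univ)) mem_univ).trans e.symm)⟩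
  intro W
  exact alphaProperty_of_relEmbedding
    ((Subrel.relEmbedding A (· ∈ W)).trans e.symm.toRelEmbedding)
    (exists_isSPartitionOn hadj hanti hn _)

/-- A digraph with no induced anti-directed odd cycle whose underlying graph is a cycle
is α-diperfect. -/
theorem cycle_alphaDiperfect {V : Type*} [Finite V] (A : V → V → Prop)
    (hirr : ∀ v, ¬ A v v) (hcyc : UnderlyingIsCycle A)
    (hA : ¬ ∃ W : Set V, IsAntiDirectedOddCycle (fun a b : W => A a.1 b.1)) :
    AlphaDiperfect A :=
  cycle_alphaDiperfect_general A hcyc hA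
end

section
/- Every locally in-semicomplete digraph is α-diperfect. -/
open Relation

variable {V : Type*}

/-!
Induct on the number of vertices. Take a vertex `r` of a terminal strong component `F` of the
digraph. A vertex outside `F` with an arc into `F` dominates all of `F`, so such vertices are
in-neighbours of `r` and form a semicomplete set `K`; moreover no vertex outside `B = F ∪ K` is
adjacent to `F`. Hence a maximum stable set `S` meets `B` either inside `F` or in a single vertex
of `K`, and in both cases `S \ B` is still maximum in `D - B`. Every vertex of `B` reaches `r`
inside `B`, and inserting vertices one at a time into a path of `B` through `r` yields a
Hamilton path of `D[B]`; cutting it between consecutive vertices of `S` gives paths with exactly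
one vertex of `S` each, which complete the partition of `D - B` obtained by induction.
-/

theorem List.exists_flatten_eq_forall_existsUnique {α : Type*} {p : α → Prop} :
    ∀ l : List α, (∃ x ∈ l, p x) →
      ∃ ps : List (List α), ps.flatten = l ∧ ∀ q ∈ ps, ∃! x, x ∈ q ∧ p x
  | [], ⟨_, hx, _⟩ => absurd hx List.not_mem_nil
  | a :: t, ⟨x, hx, hpx⟩ => by
    by_cases ht : ∃ y ∈ t, p y
    · obtain ⟨_ | ⟨q, ps⟩, rfl, hps⟩ := exists_flatten_eq_forall_existsUnique t ht
      · simp at ht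
      by_cases ha : p a
      · refine ⟨[a] :: q :: ps, rfl, ?_⟩
        rintro q' (_ | ⟨_, hq'⟩)
        · exact ⟨a, ⟨mem_singleton_self a, ha⟩, fun y hy => mem_singleton.1 hy.1⟩
        · exact hps q' hq'
      · refine ⟨(a :: q) :: ps, rfl, ?_⟩
        rintro q' (_ | ⟨_, hq'⟩)
        · obtain ⟨y, ⟨hyq, hpy⟩, hy⟩ := hps q mem_cons_self
          refine ⟨y, ⟨mem_cons_of_mem a hyq, hpy⟩, fun z ⟨hz, hpz⟩ => ?_⟩
          rcases mem_cons.1 hz with rfl | hz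
          · exact absurd hpz ha
          · exact hy z ⟨hz, hpz⟩
        · exact hps q' (mem_cons_of_mem _ hq')
    · have hmem : ∀ y ∈ a :: t, p y → y = a := fun y hy hpy =>
        (mem_cons.1 hy).resolve_right fun hyt => ht ⟨y, hyt, hpy⟩
      refine ⟨[a :: t], flatten_singleton, fun q hq => ?_⟩
      rw [mem_singleton.1 hq]
      exact ⟨a, ⟨mem_cons_self, hmem x hx hpx ▸ hpx⟩, fun y hy => hmem y hy.1 hy.2⟩

theorem Relation.ReflTransGen.exists_notMem_mem_rel {α : Type*} {r : α → α → Prop} {X : Set α}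
    {a b : α} (h : ReflTransGen r a b) (ha : a ∉ X) (hb : b ∈ X) :
    ∃ x y, x ∉ X ∧ y ∈ X ∧ r x y := by
  induction h with
  | refl => exact absurd hb ha
  | @tail c d _ hcd ih =>
    by_cases hc : c ∈ X
    · exact ih hc
    · exact ⟨c, d, hc, hb, hcd⟩

theorem Relation.exists_reflTransGen_terminal {α : Type*} [Finite α] (r : α → α → Prop) (a : α) :
    ∃ t, ReflTransGen r a t ∧ ∀ y, ReflTransGen r t y → ReflTransGen r y t := by
  obtain ⟨t, hat, hmin⟩ := Set.exists_min_image {t | ReflTransGen r a t}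
    (fun t => {y | ReflTransGen r t y}.ncard) (Set.toFinite _) ⟨a, .refl⟩
  refine ⟨t, hat, fun y hty => ?_⟩
  have hsub : {z | ReflTransGen r y z} ⊆ {z | ReflTransGen r t z} := fun z hz => hty.trans hz
  have heq := Set.eq_of_subset_of_ncard_le hsub (hmin y (hat.trans hty))
  have ht : t ∈ {z | ReflTransGen r t z} := .refl
  rwa [← heq] at ht

section Stable

variable {A : V → V → Prop}

theorem DAdj.symm {u v : V} (h : DAdj A u v) : DAdj A v u := Or.symm h

theorem IsStable.union {T Z : Set V} (hT : IsStable A T) (hZ : IsStable A Z)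
    (hTZ : ∀ t ∈ T, ∀ z ∈ Z, ¬ DAdj A t z) : IsStable A (T ∪ Z) := by
  rintro u (hu | hu) v (hv | hv) huv
  · exact hT u hu v hv huv
  · exact hTZ u hu v hv
  · exact fun h => hTZ v hv u hu h.symm
  · exact hZ u hu v hv huv

theorem isStable_singleton (v : V) : IsStable A {v} :=
  fun _ hu _ hv huv => absurd (hu.trans hv.symm) huv

/-- Relative to a vertex set `U` (like `IsSPartitionOn` below), so that the induction on `U`
stays inside one vertex type. -/
structure IsMaxStableOn (A : V → V → Prop) (U S : Set V) : Prop where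
  subset : S ⊆ U
  isStable : IsStable A S
  ncard_le : ∀ T ⊆ U, IsStable A T → T.ncard ≤ S.ncard

variable [Finite V] {U S : Set V}

theorem IsMaxStableOn.ncard_add_ncard_le (hS : IsMaxStableOn A U S) {T Z : Set V}
    (hTU : T ⊆ U) (hZU : Z ⊆ U) (hT : IsStable A T) (hZ : IsStable A Z)
    (hTZ : ∀ t ∈ T, ∀ z ∈ Z, ¬ DAdj A t z) (hdisj : Disjoint T Z) :
    T.ncard + Z.ncard ≤ S.ncard := by
  rw [← Set.ncard_union_eq hdisj]
  exact hS.ncard_le _ (Set.union_subset hTU hZU) (hT.union hZ hTZ)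

theorem IsMaxStableOn.diff (hS : IsMaxStableOn A U S) {B Z : Set V} (hBU : B ⊆ U)
    (hZB : Z ⊆ B) (hZ : IsStable A Z) (hZU : ∀ t ∈ U \ B, ∀ z ∈ Z, ¬ DAdj A t z)
    (hcard : (S ∩ B).ncard ≤ Z.ncard) : IsMaxStableOn A (U \ B) (S \ B) where
  subset := Set.sdiff_subset_sdiff_left hS.subset
  isStable u hu v hv := hS.isStable u hu.1 v hv.1
  ncard_le T hT hTst := by
    have hT_le := hS.ncard_add_ncard_le (hT.trans Set.sdiff_subset) (hZB.trans hBU) hTst hZ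
      (fun t ht => hZU t (hT ht)) (Set.disjoint_sdiff_left.mono hT hZB)
    have hS_eq := Set.ncard_inter_add_ncard_sdiff_eq_ncard S B
    omega

end Stable

section Reach

variable {A : V → V → Prop}

def InducedArc (A : V → V → Prop) (U : Set V) (u v : V) : Prop := u ∈ U ∧ v ∈ U ∧ A u v

theorem InducedArc.mono {U W : Set V} (hUW : U ⊆ W) {u v : V} (h : InducedArc A U u v) :
    InducedArc A W u v :=
  ⟨hUW h.1, hUW h.2.1, h.2.2⟩

theorem Relation.ReflTransGen.inducedArc_of_closed {U F : Set V}
    (hF : ∀ x ∈ F, ∀ y, InducedArc A U x y → y ∈ F) {u v : V}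
    (h : ReflTransGen (InducedArc A U) u v) (hu : u ∈ F) : ReflTransGen (InducedArc A F) u v := by
  induction h using ReflTransGen.head_induction_on with
  | refl => exact .refl
  | head huc _ ih =>
    have hc := hF _ hu _ huc
    exact .head ⟨hu, hc, huc.2.2⟩ (ih hc)

end Reach

namespace LocallyInSemicomplete

variable {A : V → V → Prop}

theorem induce (h : LocallyInSemicomplete A) (W : Set V) :
    LocallyInSemicomplete (fun a b : W => A a.1 b.1) :=
  fun _ _ _ hu hw hne => h _ _ _ hu hw (Subtype.val_injective.ne hne)

/-- Walking back from `v`, the first predecessor `a` of some `b` that `u` does not dominate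
dominates `u`, since `a` and `u` are both in-neighbours of `b`. -/
theorem exists_insert (h : LocallyInSemicomplete A) {u v : V} {l : List V} (hl : l.IsChain A)
    (hu : u ∉ l) (hv : v ∈ l) (huv : A u v) :
    ∃ l₁ l₂, l = l₁ ++ l₂ ∧ (l₁ ++ u :: l₂).IsChain A := by
  induction l with
  | nil => exact absurd hv List.not_mem_nil
  | cons a t ih =>
    have hua : u ≠ a := fun hua => hu (hua ▸ List.mem_cons_self)
    by_cases hvt : v ∈ t
    · obtain ⟨l₁, l₂, rfl, hchain⟩ := ih hl.tail (fun hut => hu (List.mem_cons_of_mem a hut)) hvt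
      cases l₁ with
      | nil =>
        obtain _ | ⟨b, t⟩ := l₂
        · exact absurd hvt List.not_mem_nil
        rcases h b a u (List.isChain_cons_cons.1 hl).1 (List.isChain_cons_cons.1 hchain).1
          hua.symm with hau | hua'
        · exact ⟨[a], b :: t, rfl, List.isChain_cons_cons.2 ⟨hau, hchain⟩⟩
        · exact ⟨[], a :: b :: t, rfl, List.isChain_cons_cons.2 ⟨hua', hl⟩⟩
      | cons c l₁ =>
        exact ⟨a :: c :: l₁, l₂, rfl,
          List.isChain_cons_cons.2 ⟨(List.isChain_cons_cons.1 hl).1, hchain⟩⟩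
    · obtain rfl : v = a := (List.mem_cons.1 hv).resolve_right hvt
      exact ⟨[], v :: t, rfl, List.isChain_cons_cons.2 ⟨huv, hl⟩⟩

/-- A longest path of `D[B]` through `r` misses no vertex: a missing vertex reaches `r`, so some
vertex off the path has an out-neighbour on it and can be inserted. -/
theorem exists_hamiltonian_path [Finite V] (h : LocallyInSemicomplete A) {B : Set V} {r : V}
    (hr : r ∈ B) (hreach : ∀ u ∈ B, ReflTransGen (InducedArc A B) u r) :
    ∃ l, IsDiPath A l ∧ ∀ x, x ∈ l ↔ x ∈ B := by
  have : Fintype V := Fintype.ofFinite V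
  have hfin : {l : List V | IsDiPath A l ∧ (∀ x ∈ l, x ∈ B) ∧ r ∈ l}.Finite :=
    (Set.finite_coe_iff.1 (inferInstanceAs (Finite {l : List V // l.Nodup}))).subset
      fun l hl => hl.1.2.1
  obtain ⟨l, ⟨hl, hlB, hrl⟩, hmax⟩ := Set.exists_max_image _ List.length hfin
    ⟨[r], ⟨List.cons_ne_nil r [], List.nodup_singleton r, List.isChain_singleton r⟩,
      by simpa using hr, List.mem_singleton_self r⟩
  refine ⟨l, hl, fun x => ⟨hlB x, fun hx => by_contra fun hxl => ?_⟩⟩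
  obtain ⟨a, b, hal, hbl, hab⟩ :=
    (hreach x hx).exists_notMem_mem_rel (X := {y | y ∈ l}) hxl hrl
  obtain ⟨l₁, l₂, rfl, hchain⟩ := h.exists_insert hl.2.2 hal hbl hab.2.2
  have hperm : (l₁ ++ a :: l₂).Perm (a :: (l₁ ++ l₂)) := List.perm_middle
  have hlonger := hmax (l₁ ++ a :: l₂)
    ⟨⟨by simp, hperm.nodup_iff.2 (List.nodup_cons.2 ⟨hal, hl.2.1⟩), hchain⟩,
      fun y hy => (List.mem_cons.1 (hperm.mem_iff.1 hy)).elim (· ▸ hab.1) (hlB y),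
      hperm.mem_iff.2 (List.mem_cons_of_mem a hrl)⟩
  simp at hlonger

/-- Along the path from `f'` to `f`, each vertex and `k` are in-neighbours of the next one,
and no arc leaves `F`. -/
theorem arc_of_reflTransGen (h : LocallyInSemicomplete A) {U F : Set V}
    (hF : ∀ x ∈ F, ∀ y, InducedArc A U x y → y ∈ F) {k f f' : V} (hkU : k ∈ U) (hkF : k ∉ F)
    (hkf : A k f) (hf' : f' ∈ F) (hf'f : ReflTransGen (InducedArc A U) f' f) : A k f' := by
  induction hf'f using ReflTransGen.head_induction_on with
  | refl => exact hkf
  | head hf'c _ ih =>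
    have hkc := ih (hF _ hf' _ hf'c)
    rcases h _ _ _ hf'c.2.2 hkc fun he => hkF (he ▸ hf') with hf'k | hkf'
    · exact absurd (hF _ hf' k ⟨hf'c.1, hkU, hf'k⟩) hkF
    · exact hkf'

end LocallyInSemicomplete

section TerminalBlock

variable {A : V → V → Prop} {U S : Set V} {r : V}

/-- `r` lies in a terminal strong component of `D[U]`. -/
def InTerminalComponent (A : V → V → Prop) (U : Set V) (r : V) : Prop :=
  ∀ y, ReflTransGen (InducedArc A U) r y → ReflTransGen (InducedArc A U) y r

def reachSet (A : V → V → Prop) (U : Set V) (r : V) : Set V :=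
  {u | ReflTransGen (InducedArc A U) r u}

/-- When `r` lies in a terminal strong component `F = reachSet A U r` of `D[U]`, this is `F`
together with the in-neighbours of `F` in `U` (which all dominate `r`). -/
def terminalBlock (A : V → V → Prop) (U : Set V) (r : V) : Set V :=
  {u ∈ U | u ∈ reachSet A U r ∨ A u r}

theorem mem_reachSet_of_inducedArc {x y : V} (hx : x ∈ reachSet A U r)
    (hxy : InducedArc A U x y) : y ∈ reachSet A U r :=
  ReflTransGen.tail hx hxy

theorem reachSet_subset (hr : r ∈ U) : reachSet A U r ⊆ U := fun _ hu =>
  hu.cases_tail.elim (· ▸ hr) fun ⟨_, _, harc⟩ => harc.2.1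

theorem terminalBlock_subset : terminalBlock A U r ⊆ U := fun _ hu => hu.1

theorem reachSet_subset_terminalBlock (hr : r ∈ U) : reachSet A U r ⊆ terminalBlock A U r :=
  fun _ hu => ⟨reachSet_subset hr hu, Or.inl hu⟩

theorem mem_terminalBlock (hr : r ∈ U) : r ∈ terminalBlock A U r :=
  reachSet_subset_terminalBlock hr .refl

theorem LocallyInSemicomplete.arc_of_arc_reachSet (hloc : LocallyInSemicomplete A)
    (hterm : InTerminalComponent A U r) {t f f' : V} (htU : t ∈ U) (ht : t ∉ reachSet A U r)
    (hf : f ∈ reachSet A U r) (htf : A t f) (hf' : f' ∈ reachSet A U r) : A t f' :=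
  hloc.arc_of_reflTransGen (fun _ hx _ hxy => mem_reachSet_of_inducedArc hx hxy) htU ht htf hf'
    ((hterm f' hf').trans hf)

theorem LocallyInSemicomplete.not_dAdj_of_notMem_terminalBlock (hloc : LocallyInSemicomplete A)
    (hr : r ∈ U) (hterm : InTerminalComponent A U r) {t f : V}
    (ht : t ∈ U \ terminalBlock A U r) (hf : f ∈ reachSet A U r) : ¬ DAdj A t f := by
  obtain ⟨htU, htB⟩ := ht
  have htF : t ∉ reachSet A U r := fun htF => htB ⟨htU, Or.inl htF⟩
  rintro (htf | hft)
  · exact htB ⟨htU, Or.inr (hloc.arc_of_arc_reachSet hterm htU htF hf htf .refl)⟩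
  · exact htF (mem_reachSet_of_inducedArc hf ⟨reachSet_subset hr hf, htU, hft⟩)

theorem reflTransGen_inducedArc_terminalBlock (hr : r ∈ U) (hterm : InTerminalComponent A U r)
    {u : V} (hu : u ∈ terminalBlock A U r) :
    ReflTransGen (InducedArc A (terminalBlock A U r)) u r := by
  obtain ⟨huU, huF | hur⟩ := hu
  · exact ReflTransGen.mono (fun _ _ => InducedArc.mono (reachSet_subset_terminalBlock hr)) _ _
      ((hterm u huF).inducedArc_of_closed (fun _ hx _ hxy => mem_reachSet_of_inducedArc hx hxy)
        huF)
  · exact .single ⟨⟨huU, Or.inr hur⟩, mem_terminalBlock hr, hur⟩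

variable [Finite V]

/-- A vertex of `K = terminalBlock \ reachSet` dominates the whole component, and `K` is
semicomplete, so a stable set meets `terminalBlock` inside the component or in one vertex. -/
theorem LocallyInSemicomplete.exists_stable_ncard_inter_terminalBlock_le
    (hloc : LocallyInSemicomplete A) (hterm : InTerminalComponent A U r) (hS : IsStable A S) :
    ∃ Z ⊆ reachSet A U r, IsStable A Z ∧ (S ∩ terminalBlock A U r).ncard ≤ Z.ncard := by
  by_cases hSF : S ∩ terminalBlock A U r ⊆ reachSet A U r
  · exact ⟨_, hSF, fun u hu v hv => hS u hu.1 v hv.1, le_rfl⟩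
  obtain ⟨k, ⟨hkS, hkU, hkF | hkr⟩, hkF'⟩ := Set.not_subset.1 hSF
  · exact absurd hkF hkF'
  have harc : ∀ v ∈ S ∩ terminalBlock A U r, A v r := by
    rintro v ⟨hvS, -, hvF | hvr⟩
    · refine absurd (Or.inl (hloc.arc_of_arc_reachSet hterm hkU hkF' .refl hkr hvF))
        (hS k hkS v hvS ?_)
      rintro rfl
      exact hkF' hvF
    · exact hvr
  refine ⟨{r}, Set.singleton_subset_iff.2 .refl, isStable_singleton r, ?_⟩
  rw [Set.ncard_singleton, Set.ncard_le_one]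
  intro a ha b hb
  by_contra hab
  exact hS a ha.1 b hb.1 hab (hloc r a b (harc a ha) (harc b hb) hab)

theorem IsMaxStableOn.diff_terminalBlock (hS : IsMaxStableOn A U S)
    (hloc : LocallyInSemicomplete A) (hr : r ∈ U) (hterm : InTerminalComponent A U r) :
    IsMaxStableOn A (U \ terminalBlock A U r) (S \ terminalBlock A U r) :=
  let ⟨_, hZF, hZ, hcard⟩ := hloc.exists_stable_ncard_inter_terminalBlock_le hterm hS.isStable
  hS.diff terminalBlock_subset (hZF.trans (reachSet_subset_terminalBlock hr)) hZ
    (fun _ ht _ hz => hloc.not_dAdj_of_notMem_terminalBlock hr hterm ht (hZF hz)) hcard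

theorem IsMaxStableOn.inter_terminalBlock_nonempty (hS : IsMaxStableOn A U S)
    (hloc : LocallyInSemicomplete A) (hr : r ∈ U) (hterm : InTerminalComponent A U r) :
    (S ∩ terminalBlock A U r).Nonempty := by
  by_contra hSB
  have hSU : S ⊆ U \ terminalBlock A U r := fun s hs =>
    ⟨hS.subset hs, fun hsB => hSB ⟨s, hs, hsB⟩⟩
  have := hS.ncard_add_ncard_le hS.subset (Set.singleton_subset_iff.2 hr) hS.isStable
    (isStable_singleton r)
    (fun t ht _ hz => hloc.not_dAdj_of_notMem_terminalBlock hr hterm (hSU ht) (hz ▸ .refl))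
    (Set.disjoint_singleton_right.2 fun hrS => (hSU hrS).2 (mem_terminalBlock hr))
  rw [Set.ncard_singleton] at this
  omega

end TerminalBlock

section Partition

variable {A : V → V → Prop} {U B S : Set V}

structure IsSPartitionOn_s16 (A : V → V → Prop) (U S : Set V) (P : Set (List V)) : Prop where
  isDiPath : ∀ l ∈ P, IsDiPath A l
  subset : ∀ l ∈ P, ∀ x ∈ l, x ∈ U
  existsUnique_path : ∀ v ∈ U, ∃! l, l ∈ P ∧ v ∈ l
  existsUnique_mem : ∀ l ∈ P, ∃! s, s ∈ l ∧ s ∈ S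

theorem isSPartitionOn_empty_s16 : IsSPartitionOn_s16 A ∅ S ∅ :=
  ⟨fun _ h => h.elim, fun _ h => h.elim, fun _ h => h.elim, fun _ h => h.elim⟩

theorem IsSPartitionOn_s16.union {P₁ P₂ : Set (List V)} (h₁ : IsSPartitionOn_s16 A B S P₁)
    (h₂ : IsSPartitionOn_s16 A (U \ B) (S \ B) P₂) (hBU : B ⊆ U) :
    IsSPartitionOn_s16 A U S (P₁ ∪ P₂) where
  isDiPath l hl := hl.elim (h₁.isDiPath l) (h₂.isDiPath l)
  subset l hl x hx :=
    hl.elim (fun hl => hBU (h₁.subset l hl x hx)) fun hl => (h₂.subset l hl x hx).1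
  existsUnique_path v hv := by
    by_cases hvB : v ∈ B
    · obtain ⟨l, hl, hu⟩ := h₁.existsUnique_path v hvB
      refine ⟨l, ⟨Or.inl hl.1, hl.2⟩, fun l' ⟨hl', hvl'⟩ => hl'.elim (fun hl' => hu l' ⟨hl', hvl'⟩)
        fun hl' => absurd hvB (h₂.subset l' hl' v hvl').2⟩
    · obtain ⟨l, hl, hu⟩ := h₂.existsUnique_path v ⟨hv, hvB⟩
      refine ⟨l, ⟨Or.inr hl.1, hl.2⟩, fun l' ⟨hl', hvl'⟩ => hl'.elim
        (fun hl' => absurd (h₁.subset l' hl' v hvl') hvB) fun hl' => hu l' ⟨hl', hvl'⟩⟩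
  existsUnique_mem l hl := by
    rcases hl with hl | hl
    · exact h₁.existsUnique_mem l hl
    · obtain ⟨s, ⟨hsl, hsS⟩, hu⟩ := h₂.existsUnique_mem l hl
      exact ⟨s, ⟨hsl, hsS.1⟩, fun s' ⟨hs'l, hs'S⟩ => hu s' ⟨hs'l, hs'S, (h₂.subset l hl s' hs'l).2⟩⟩

theorem isSPartitionOn_of_flatten {ps : List (List V)} (hps : IsDiPath A ps.flatten)
    (hB : ∀ x, x ∈ ps.flatten ↔ x ∈ B) (hS : ∀ q ∈ ps, ∃! s, s ∈ q ∧ s ∈ S) :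
    IsSPartitionOn_s16 A B S {q | q ∈ ps} where
  isDiPath q hq :=
    ⟨fun h => by simpa [h] using (hS q hq).exists, hps.2.1.sublist (List.sublist_flatten_of_mem hq),
      hps.2.2.infix (List.infix_of_mem_flatten hq)⟩
  subset q hq x hx := (hB x).1 (List.mem_flatten.2 ⟨q, hq, hx⟩)
  existsUnique_path v hv := by
    obtain ⟨q, hq, hvq⟩ := List.mem_flatten.1 ((hB v).2 hv)
    refine ⟨q, ⟨hq, hvq⟩, fun q' ⟨hq', hvq'⟩ => by_contra fun hne => ?_⟩
    have : Std.Symm (List.Disjoint (α := V)) := ⟨fun _ _ h => h.symm⟩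
    exact (List.nodup_flatten.1 hps.2.1).2.forall hq' hq hne hvq' hvq
  existsUnique_mem := hS

end Partition

theorem LocallyInSemicomplete.exists_isSPartitionOn_terminalBlock [Finite V]
    {A : V → V → Prop} {U S : Set V} {r : V} (hloc : LocallyInSemicomplete A)
    (hS : IsMaxStableOn A U S) (hr : r ∈ U) (hterm : InTerminalComponent A U r) :
    ∃ P, IsSPartitionOn_s16 A (terminalBlock A U r) S P := by
  obtain ⟨l, hl, hlB⟩ := hloc.exists_hamiltonian_path (mem_terminalBlock hr)
    fun _ => reflTransGen_inducedArc_terminalBlock hr hterm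
  obtain ⟨s, hsS, hsB⟩ := hS.inter_terminalBlock_nonempty hloc hr hterm
  obtain ⟨ps, rfl, hps⟩ := List.exists_flatten_eq_forall_existsUnique l ⟨s, (hlB s).2 hsB, hsS⟩
  exact ⟨_, isSPartitionOn_of_flatten hl hlB hps⟩

theorem LocallyInSemicomplete.exists_isSPartitionOn [Finite V] {A : V → V → Prop}
    (hloc : LocallyInSemicomplete A) (U S : Set V) (hS : IsMaxStableOn A U S) :
    ∃ P, IsSPartitionOn_s16 A U S P := by
  obtain rfl | ⟨u, hu⟩ := U.eq_empty_or_nonempty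
  · exact ⟨∅, isSPartitionOn_empty_s16⟩
  obtain ⟨r, hur, hterm⟩ := Relation.exists_reflTransGen_terminal (InducedArc A U) u
  have hr : r ∈ U := reachSet_subset hu hur
  obtain ⟨P₁, hP₁⟩ := hloc.exists_isSPartitionOn_terminalBlock hS hr hterm
  obtain ⟨P₂, hP₂⟩ := hloc.exists_isSPartitionOn _ _ (hS.diff_terminalBlock hloc hr hterm)
  exact ⟨P₁ ∪ P₂, hP₁.union hP₂ terminalBlock_subset⟩
termination_by U.ncard
decreasing_by
  exact Set.ncard_lt_ncard ⟨Set.sdiff_subset, fun h => (h hr).2 (mem_terminalBlock hr)⟩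

theorem LocallyInSemicomplete.alphaProperty [Finite V] {A : V → V → Prop}
    (hloc : LocallyInSemicomplete A) : AlphaProperty A := by
  intro S hS
  obtain ⟨P, hP⟩ := hloc.exists_isSPartitionOn Set.univ S
    ⟨Set.subset_univ S, hS.1, fun T _ hT => hS.2 T hT⟩
  exact ⟨P, ⟨hP.isDiPath, fun v => hP.existsUnique_path v trivial⟩, hP.existsUnique_mem⟩

theorem locally_in_semicomplete_alphaDiperfect_general {V : Type*} [Finite V]
    (A : V → V → Prop) (h : LocallyInSemicomplete A) :
    AlphaDiperfect A :=
  fun W => (h.induce W).alphaProperty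

/-- Every locally in-semicomplete digraph is α-diperfect. -/
theorem locally_in_semicomplete_alphaDiperfect {V : Type*} [Finite V]
    (A : V → V → Prop) (hirr : ∀ v, ¬ A v v) (h : LocallyInSemicomplete A) :
    AlphaDiperfect A :=
  locally_in_semicomplete_alphaDiperfect_general A h
end
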